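/- arXiv:0709.1034 — 6 statements merged into one kernel-verified Lean document; each statement's English description precedes it below -/
import Mathlib

section
/- For every b > 0, every t > 0 and all x, x' ∈ ℝ³, one has e^{bt} · |M_b(t,x,x')| ≤ (4πt)^{−3/2} · (1 + 2bt) · exp(−|x−x'|²/(4t)). (Multiplying both sides by e^{−tm²}, this is the estimate for the heat kernel of E_A² = (p−eA)² − eσ·B + m², whose kernel has modulus at most e^{−tm²} e^{bt} |M_b(t,x,x')|.) -/
open Real MeasureTheory

/-- The hyperbolic cotangent `coth z = cosh z / sinh z`. -/
noncomputable def coth (z : ℝ) : ℝ := Real.cosh z / Real.sinh z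

/-- The Mehler heat kernel `M_b(t,x,x')` of the magnetic Schrödinger operator
`H_s = (p - eA)²` with `A(x) = (b/2)(-x₂, x₁, 0)` for a constant magnetic field
of strength `b`. -/
noncomputable def mehlerKernel (b t : ℝ) (x x' : EuclideanSpace ℝ (Fin 3)) : ℂ :=
  (((4 * π * t) ^ (-(1 : ℝ) / 2) * (b / (4 * π * Real.sinh (b * t))) : ℝ) : ℂ) *
    Complex.exp (-Complex.I * ((b / 2 * (x 0 * x' 1 - x 1 * x' 0) : ℝ) : ℂ)) *
    ((Real.exp (-(x 2 - x' 2) ^ 2 / (4 * t)) : ℝ) : ℂ) *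
    ((Real.exp (-(b / 4) * coth (b * t) * ((x 0 - x' 0) ^ 2 + (x 1 - x' 1) ^ 2)) : ℝ) : ℂ)

/-!
The magnetic phase has modulus one, so `|M_b|` is the prefactor times two real Gaussians, one
along the field and one transverse to it. The longitudinal Gaussian is already the free one.
The transverse one is dominated by the free Gaussian because `s coth s ≥ 1`, i.e.
`sinh s ≤ s cosh s`. What remains is the prefactor, where `e^s s / sinh s ≤ 1 + 2s` for
`s = bt`; multiplied by `2 e^s sinh s` this is `1 + 2s ≤ e^{2s}`.
-/

lemma Real.sinh_le_mul_cosh {x : ℝ} (hx : 0 ≤ x) : sinh x ≤ x * cosh x := by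
  set f : ℝ → ℝ := fun y => y * cosh y - sinh y
  have hf : ∀ y, HasDerivAt f (y * sinh y) y := fun y => by
    have := ((hasDerivAt_id' y).fun_mul (hasDerivAt_cosh y)).fun_sub (hasDerivAt_sinh y)
    rwa [one_mul, add_sub_cancel_left] at this
  have hmono : MonotoneOn f (Set.Ici 0) := by
    refine monotoneOn_of_deriv_nonneg (convex_Ici 0)
      (fun y _ => (hf y).continuousAt.continuousWithinAt)
      (fun y _ => (hf y).differentiableAt.differentiableWithinAt) fun y hy => ?_
    rw [interior_Ici, Set.mem_Ioi] at hy
    rw [(hf y).deriv]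
    exact mul_nonneg hy.le (sinh_nonneg_iff.2 hy.le)
  have := hmono Set.self_mem_Ici hx hx
  simp only [f, zero_mul, sinh_zero, sub_zero] at this
  linarith

lemma one_le_mul_coth {x : ℝ} (hx : 0 < x) : 1 ≤ x * coth x := by
  rw [coth, mul_div_assoc', le_div_iff₀ (sinh_pos_iff.2 hx), one_mul]
  exact sinh_le_mul_cosh hx.le

lemma Real.exp_mul_le_one_add_two_mul_mul_sinh (s : ℝ) :
    exp s * s ≤ (1 + 2 * s) * sinh s := by
  have hexp : exp s * exp (-s) = 1 := by rw [← exp_add, add_neg_cancel, exp_zero]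
  have h2s : 2 * s + 1 ≤ exp s * exp s := by rw [← exp_add, ← two_mul]; exact add_one_le_exp _
  rw [sinh_eq]
  nlinarith [exp_pos s]

lemma EuclideanSpace.norm_sub_sq_fin_three (x x' : EuclideanSpace ℝ (Fin 3)) :
    ‖x - x'‖ ^ 2 = (x 0 - x' 0) ^ 2 + (x 1 - x' 1) ^ 2 + (x 2 - x' 2) ^ 2 := by
  simp [EuclideanSpace.real_norm_sq_eq, Fin.sum_univ_three]

noncomputable def mehlerPrefactor (b t : ℝ) : ℝ :=
  (4 * π * t) ^ (-(1 : ℝ) / 2) * (b / (4 * π * sinh (b * t)))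

lemma norm_mehlerKernel (b t : ℝ) (x x' : EuclideanSpace ℝ (Fin 3)) :
    ‖mehlerKernel b t x x'‖ = |mehlerPrefactor b t| * exp (-(x 2 - x' 2) ^ 2 / (4 * t)) *
      exp (-(b / 4) * coth (b * t) * ((x 0 - x' 0) ^ 2 + (x 1 - x' 1) ^ 2)) := by
  have hphase :
      ‖Complex.exp (-Complex.I * ((b / 2 * (x 0 * x' 1 - x 1 * x' 0) : ℝ) : ℂ))‖ = 1 := by
    simp [Complex.norm_exp]
  simp only [mehlerKernel, mehlerPrefactor, norm_mul, hphase, Complex.norm_real, Real.norm_eq_abs,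
    mul_one, abs_of_pos (exp_pos _), abs_mul]

lemma exp_mul_abs_mehlerPrefactor_le {b t : ℝ} (hb : 0 < b) (ht : 0 < t) :
    exp (b * t) * |mehlerPrefactor b t| ≤ (4 * π * t) ^ (-(3 : ℝ) / 2) * (1 + 2 * b * t) := by
  have hsinh : 0 < sinh (b * t) := sinh_pos_iff.2 (by positivity)
  have hpow :
      (4 * π * t) ^ (-(3 : ℝ) / 2) = (4 * π * t) ^ (-(1 : ℝ) / 2) * (4 * π * t)⁻¹ := by
    rw [← rpow_neg_one, ← rpow_add (by positivity)]
    norm_num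
  have hscalar :
      exp (b * t) * (b / (4 * π * sinh (b * t))) ≤ (4 * π * t)⁻¹ * (1 + 2 * b * t) := by
    rw [mul_div_assoc', inv_mul_eq_div, div_le_div_iff₀ (by positivity) (by positivity)]
    have := exp_mul_le_one_add_two_mul_mul_sinh (b * t)
    have := pi_pos
    nlinarith
  rw [mehlerPrefactor, abs_of_pos (by positivity)]
  calc exp (b * t) * ((4 * π * t) ^ (-(1 : ℝ) / 2) * (b / (4 * π * sinh (b * t))))
      = (4 * π * t) ^ (-(1 : ℝ) / 2) * (exp (b * t) * (b / (4 * π * sinh (b * t)))) := by ring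
    _ ≤ (4 * π * t) ^ (-(1 : ℝ) / 2) * ((4 * π * t)⁻¹ * (1 + 2 * b * t)) := by gcongr
    _ = (4 * π * t) ^ (-(3 : ℝ) / 2) * (1 + 2 * b * t) := by rw [hpow]; ring

lemma exp_neg_mul_coth_le {b t r : ℝ} (hb : 0 < b) (ht : 0 < t) (hr : 0 ≤ r) :
    exp (-(b / 4) * coth (b * t) * r) ≤ exp (-r / (4 * t)) := by
  have hcoth := one_le_mul_coth (mul_pos hb ht)
  rw [exp_le_exp, neg_div, neg_mul, neg_mul, neg_le_neg_iff, div_le_iff₀ (by positivity)]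
  nlinarith [mul_le_mul_of_nonneg_left hcoth hr]

/-- For every `b > 0`, every `t > 0` and all `x, x' ∈ ℝ³`,
`e^{bt} |M_b(t,x,x')| ≤ (4πt)^{-3/2} (1 + 2bt) exp(-|x-x'|²/(4t))`.
(Multiplying both sides by `e^{-tm²}`, this is the estimate for the heat kernel of
`E_A² = (p-eA)² - eσ·B + m²`, whose kernel has modulus at most
`e^{-tm²} e^{bt} |M_b(t,x,x')|`.) -/
theorem exp_mul_mehlerKernel_le (b : ℝ) (hb : 0 < b) (t : ℝ) (ht : 0 < t)
    (x x' : EuclideanSpace ℝ (Fin 3)) :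
    Real.exp (b * t) * ‖mehlerKernel b t x x'‖ ≤
      (4 * π * t) ^ (-(3 : ℝ) / 2) * (1 + 2 * b * t) *
        Real.exp (-‖x - x'‖ ^ 2 / (4 * t)) := by
  set z := (x 2 - x' 2) ^ 2
  set r := (x 0 - x' 0) ^ 2 + (x 1 - x' 1) ^ 2
  have hsplit : exp (-‖x - x'‖ ^ 2 / (4 * t)) = exp (-z / (4 * t)) * exp (-r / (4 * t)) := by
    rw [EuclideanSpace.norm_sub_sq_fin_three, ← exp_add]
    congr 1
    ring
  rw [norm_mehlerKernel, hsplit]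
  calc exp (b * t) * (|mehlerPrefactor b t| * exp (-z / (4 * t)) *
          exp (-(b / 4) * coth (b * t) * r))
      = exp (b * t) * |mehlerPrefactor b t| * exp (-z / (4 * t)) *
          exp (-(b / 4) * coth (b * t) * r) := by ring
    _ ≤ (4 * π * t) ^ (-(3 : ℝ) / 2) * (1 + 2 * b * t) * exp (-z / (4 * t)) *
          exp (-r / (4 * t)) := by
      gcongr ?_ * _ * ?_
      · exact exp_mul_abs_mehlerPrefactor_le hb ht
      · exact exp_neg_mul_coth_le hb ht (by positivity)
    _ = _ := by ring
end

section
/- For all m > 0, b ≥ 0 and z > 0: ∫₀^∞ τ^{−2} e^{−τm²} e^{−z²/(4τ)} [ 3/(2τ) + 5b + m² + b z²/(2τ) + z²/(4τ²) + 2bτ(m² + 2b) ] dτ ≤ 4 { K₁(mz) · [ 14m/z³ + (2m³ + 7mb)/z ] + K₀(mz) · [ 7m²/z² + 2b(m² + b) ] }. -/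
open Real MeasureTheory

/-- The modified Bessel function of the second kind,
`K_ν(z) = ∫₀^∞ e^{-z cosh u} cosh(νu) du` for `z > 0`. -/
noncomputable def besselK (ν z : ℝ) : ℝ :=
  ∫ u in Set.Ioi (0 : ℝ), Real.exp (-z * Real.cosh u) * Real.cosh (ν * u)

/-!
The substitution `τ = (z / 2m) e^u` turns `τ^(-ν-1) e^{-τm²} e^{-z²/4τ} dτ` into
`(2m/z)^ν e^{-mz cosh u - νu} du`, so each power of `τ` in the integrand contributes a multiple of
`K_ν(mz)` with `ν ∈ {0, 1, 2, 3}`. Integrating the derivative of `e^{-x cosh u + νu}` over the line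
gives the recurrence `K_{ν+1}(x) = K_{ν-1}(x) + (2ν/x) K_ν(x)`, which expresses `K_2` and `K_3`
through `K_0` and `K_1`; the bound then holds with equality.
-/

open Set Filter

lemma sq_div_four_le_cosh (u : ℝ) : u ^ 2 / 4 ≤ cosh u := by
  rw [← cosh_abs, cosh_eq]
  nlinarith [quadratic_le_exp_of_nonneg (abs_nonneg u), exp_pos (-|u|), sq_abs u, abs_nonneg u]

lemma integrable_exp_neg_mul_cosh_add_mul {c : ℝ} (hc : 0 < c) (k : ℝ) :
    Integrable fun u : ℝ => exp (-c * cosh u + k * u) := by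
  have hgauss : Integrable fun u : ℝ => exp (k ^ 2 / c) * exp (-(c / 4) * (u - 2 * k / c) ^ 2) :=
    ((integrable_exp_neg_mul_sq (by positivity)).comp_sub_right _).const_mul _
  refine hgauss.mono' (by fun_prop) (Eventually.of_forall fun u => ?_)
  have hsq : k ^ 2 / c + -(c / 4) * (u - 2 * k / c) ^ 2 = -(c / 4) * u ^ 2 + k * u := by
    field_simp
    ring
  rw [norm_of_nonneg (exp_pos _).le, ← exp_add, hsq, exp_le_exp]
  nlinarith [sq_div_four_le_cosh u]

lemma integral_exp_neg_mul_cosh_add_mul {c : ℝ} (hc : 0 < c) (ν : ℝ) :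
    ∫ u, exp (-c * cosh u + ν * u) = 2 * besselK ν c := by
  have hf := integrable_exp_neg_mul_cosh_add_mul hc ν
  calc ∫ u, exp (-c * cosh u + ν * u)
      = (∫ u, (exp (-c * cosh u + ν * u) + exp (-c * cosh (-u) + ν * -u))) / 2 := by
        rw [integral_add hf hf.comp_neg, integral_neg_eq_self (fun u => exp (-c * cosh u + ν * u))]
        ring
    _ = ∫ u, exp (-c * cosh |u|) * cosh (ν * |u|) := by
        rw [← integral_div]
        congr 1 with u
        have hcosh : cosh (ν * |u|) = cosh (ν * u) := by
          rcases abs_choice u with h | h <;> simp [h]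
        rw [hcosh, cosh_abs, cosh_neg, cosh_eq (ν * u), mul_neg, exp_add, exp_add]
        ring
    _ = 2 * besselK ν c := integral_comp_abs (f := fun u => exp (-c * cosh u) * cosh (ν * u))

lemma besselK_neg (ν z : ℝ) : besselK (-ν) z = besselK ν z := by
  simp only [besselK, neg_mul, cosh_neg]

lemma besselK_add_one {c : ℝ} (hc : 0 < c) (ν : ℝ) :
    besselK (ν + 1) c = besselK (ν - 1) c + 2 * ν / c * besselK ν c := by
  set F : ℝ → ℝ → ℝ := fun k u => exp (-c * cosh u + k * u) with hF
  have hderiv : ∀ u, HasDerivAt (F ν)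
      (ν * F ν u - c / 2 * F (ν + 1) u + c / 2 * F (ν - 1) u) u := by
    intro u
    have h : HasDerivAt (fun u => -c * cosh u + ν * u) (-c * sinh u + ν) u := by
      simpa [Pi.add_def] using
        ((hasDerivAt_cosh u).const_mul (-c)).add ((hasDerivAt_id u).const_mul ν)
    convert h.exp using 1
    simp only [hF, sinh_eq, add_mul, sub_mul, one_mul, exp_add, exp_sub, exp_neg]
    field_simp
    ring
  have hI : ∀ k, Integrable (F k) := integrable_exp_neg_mul_cosh_add_mul hc
  have hzero := integral_eq_zero_of_hasDerivAt_of_integrable hderiv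
    ((((hI ν).const_mul ν).sub ((hI _).const_mul _)).add ((hI _).const_mul _)) (hI ν)
  rw [integral_add, integral_sub, integral_const_mul, integral_const_mul,
    integral_const_mul] at hzero
  · simp only [hF, integral_exp_neg_mul_cosh_add_mul hc] at hzero
    field_simp
    linarith
  all_goals first
    | exact (hI _).const_mul _
    | exact ((hI _).const_mul _).sub ((hI _).const_mul _)

section ConstMulExpSubstitution

variable {E : Type*} [NormedAddCommGroup E] [NormedSpace ℝ E] {a : ℝ}

lemma image_univ_const_mul_exp (ha : 0 < a) : (fun u => a * exp u) '' univ = Ioi 0 := by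
  rw [image_univ, show (fun u => a * exp u) = (a * ·) ∘ exp from rfl, range_comp, range_exp,
    image_mul_left_Ioi ha, mul_zero]

lemma integral_Ioi_zero_eq_integral_const_mul_exp (ha : 0 < a) (g : ℝ → E) :
    ∫ τ in Ioi 0, g τ = ∫ u, (a * exp u) • g (a * exp u) := by
  rw [← image_univ_const_mul_exp ha, integral_image_eq_integral_abs_deriv_smul MeasurableSet.univ
    (fun x _ => ((hasDerivAt_exp x).const_mul a).hasDerivWithinAt)
    (fun _ _ _ _ h => exp_injective (mul_left_cancel₀ ha.ne' h)), setIntegral_univ]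
  simp_rw [abs_of_pos (mul_pos ha (exp_pos _))]

lemma integrableOn_Ioi_zero_iff_integrable_const_mul_exp (ha : 0 < a) (g : ℝ → E) :
    IntegrableOn g (Ioi 0) ↔ Integrable fun u => (a * exp u) • g (a * exp u) := by
  rw [← image_univ_const_mul_exp ha, integrableOn_image_iff_integrableOn_abs_deriv_smul
    MeasurableSet.univ (fun x _ => ((hasDerivAt_exp x).const_mul a).hasDerivWithinAt)
    (fun _ _ _ _ h => exp_injective (mul_left_cancel₀ ha.ne' h)), integrableOn_univ]
  simp_rw [abs_of_pos (mul_pos ha (exp_pos _))]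

end ConstMulExpSubstitution

section HeatKernelMoments

variable {m z : ℝ}

lemma smul_rpow_mul_exp_mul_exp_comp_const_mul_exp (hm : 0 < m) (hz : 0 < z) (ν u : ℝ) :
    (z / (2 * m) * exp u) • ((z / (2 * m) * exp u) ^ (-ν - 1) *
      exp (-(z / (2 * m) * exp u) * m ^ 2) * exp (-z ^ 2 / (4 * (z / (2 * m) * exp u)))) =
    (2 * m / z) ^ ν * exp (-(m * z) * cosh u + -ν * u) := by
  have hA : 0 < z / (2 * m) := by positivity
  have hτ : 0 < z / (2 * m) * exp u := mul_pos hA (exp_pos u)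
  have hexp : -(z / (2 * m) * exp u) * m ^ 2 + -z ^ 2 / (4 * (z / (2 * m) * exp u)) =
      -(m * z) * cosh u := by
    rw [cosh_eq, exp_neg]
    field_simp
    ring
  calc (z / (2 * m) * exp u) • ((z / (2 * m) * exp u) ^ (-ν - 1) *
        exp (-(z / (2 * m) * exp u) * m ^ 2) * exp (-z ^ 2 / (4 * (z / (2 * m) * exp u))))
      = (z / (2 * m) * exp u) ^ (-ν) *
          exp (-(z / (2 * m) * exp u) * m ^ 2 + -z ^ 2 / (4 * (z / (2 * m) * exp u))) := by
        rw [smul_eq_mul, rpow_sub_one hτ.ne', exp_add]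
        field_simp
    _ = (2 * m / z) ^ ν * exp (-(m * z) * cosh u + -ν * u) := by
        rw [hexp, mul_rpow hA.le (exp_pos u).le, ← exp_mul, exp_add, rpow_neg hA.le,
          ← inv_rpow hA.le, inv_div, mul_comm u]
        ring

lemma integrableOn_rpow_mul_exp_mul_exp (hm : 0 < m) (hz : 0 < z) (ν : ℝ) :
    IntegrableOn (fun τ => τ ^ (-ν - 1) * exp (-τ * m ^ 2) * exp (-z ^ 2 / (4 * τ))) (Ioi 0) := by
  rw [integrableOn_Ioi_zero_iff_integrable_const_mul_exp (by positivity : 0 < z / (2 * m))]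
  simp_rw [smul_rpow_mul_exp_mul_exp_comp_const_mul_exp hm hz]
  exact (integrable_exp_neg_mul_cosh_add_mul (mul_pos hm hz) _).const_mul _

lemma integral_rpow_mul_exp_mul_exp (hm : 0 < m) (hz : 0 < z) (ν : ℝ) :
    ∫ τ in Ioi 0, τ ^ (-ν - 1) * exp (-τ * m ^ 2) * exp (-z ^ 2 / (4 * τ)) =
      2 * (2 * m / z) ^ ν * besselK ν (m * z) := by
  rw [integral_Ioi_zero_eq_integral_const_mul_exp (by positivity : 0 < z / (2 * m))]
  simp_rw [smul_rpow_mul_exp_mul_exp_comp_const_mul_exp hm hz]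
  rw [integral_const_mul, integral_exp_neg_mul_cosh_add_mul (mul_pos hm hz), besselK_neg]
  ring

end HeatKernelMoments

theorem kinKernel_integral_le_besselK_general (m b z : ℝ) (hm : 0 < m) (hz : 0 < z) :
    (∫ τ in Set.Ioi (0 : ℝ),
        τ ^ (-(2 : ℝ)) * Real.exp (-τ * m ^ 2) * Real.exp (-z ^ 2 / (4 * τ)) *
          (3 / (2 * τ) + 5 * b + m ^ 2 + b * z ^ 2 / (2 * τ) + z ^ 2 / (4 * τ ^ 2) +
            2 * b * τ * (m ^ 2 + 2 * b))) ≤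
      4 * (besselK 1 (m * z) * (14 * m / z ^ 3 + (2 * m ^ 3 + 7 * m * b) / z) +
           besselK 0 (m * z) * (7 * m ^ 2 / z ^ 2 + 2 * b * (m ^ 2 + b))) := by
  set S : ℝ → ℝ → ℝ := fun ν τ => τ ^ (-ν - 1) * exp (-τ * m ^ 2) * exp (-z ^ 2 / (4 * τ))
    with hS
  have hterm : ∀ a ν, IntegrableOn (fun τ => a * S ν τ) (Ioi 0) :=
    fun a ν => (integrableOn_rpow_mul_exp_mul_exp hm hz ν).const_mul a
  have hK3 := besselK_add_one (mul_pos hm hz) 2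
  have hK2 := besselK_add_one (mul_pos hm hz) 1
  norm_num at hK3 hK2
  refine le_of_eq ?_
  calc _ = ∫ τ in Ioi 0, z ^ 2 / 4 * S 3 τ + (3 / 2 + b * z ^ 2 / 2) * S 2 τ +
          (5 * b + m ^ 2) * S 1 τ + 2 * b * (m ^ 2 + 2 * b) * S 0 τ :=
        setIntegral_congr_fun measurableSet_Ioi fun τ (hτ : 0 < τ) => by
          simp only [hS]
          norm_num [rpow_neg hτ.le]
          field_simp
          ring
    _ = z ^ 2 / 4 * (∫ τ in Ioi 0, S 3 τ) + (3 / 2 + b * z ^ 2 / 2) * (∫ τ in Ioi 0, S 2 τ) +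
          (5 * b + m ^ 2) * (∫ τ in Ioi 0, S 1 τ) + 2 * b * (m ^ 2 + 2 * b) * ∫ τ in Ioi 0, S 0 τ := by
        rw [integral_add, integral_add, integral_add, integral_const_mul, integral_const_mul,
          integral_const_mul, integral_const_mul]
        all_goals first
          | exact hterm _ _
          | exact (hterm _ _).add (hterm _ _)
          | exact ((hterm _ _).add (hterm _ _)).add (hterm _ _)
    _ = _ := by
        simp only [hS, integral_rpow_mul_exp_mul_exp hm hz, hK3, hK2]
        norm_num
        field_simp
        ring

/-- For all `m > 0`, `b ≥ 0` and `z > 0`: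
`∫₀^∞ τ⁻² e^{-τm²} e^{-z²/(4τ)} [3/(2τ) + 5b + m² + bz²/(2τ) + z²/(4τ²) + 2bτ(m²+2b)] dτ
  ≤ 4 { K₁(mz) [14m/z³ + (2m³+7mb)/z] + K₀(mz) [7m²/z² + 2b(m²+b)] }`. -/
theorem kinKernel_integral_le_besselK (m b z : ℝ) (hm : 0 < m) (hb : 0 ≤ b) (hz : 0 < z) :
    (∫ τ in Set.Ioi (0 : ℝ),
        τ ^ (-(2 : ℝ)) * Real.exp (-τ * m ^ 2) * Real.exp (-z ^ 2 / (4 * τ)) *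
          (3 / (2 * τ) + 5 * b + m ^ 2 + b * z ^ 2 / (2 * τ) + z ^ 2 / (4 * τ ^ 2) +
            2 * b * τ * (m ^ 2 + 2 * b))) ≤
      4 * (besselK 1 (m * z) * (14 * m / z ^ 3 + (2 * m ^ 3 + 7 * m * b) / z) +
           besselK 0 (m * z) * (7 * m ^ 2 / z ^ 2 + 2 * b * (m ^ 2 + b))) :=
  kinKernel_integral_le_besselK_general m b z hm hz
end

section
/- For all t > 0, r ≥ 0, m > 0 and b ≥ 0, setting ξ := √(t² + r²), one has the exact evaluation ∫₀^∞ e^{−τ} e^{−r²τ/t²} e^{−t²m²/(4τ)} [ 4τ²/t² + 3bτ + (b²/2)t² ] dτ = t⁴ · [ m³ K₃(mξ)/ξ³ + (3/2) b m² K₂(mξ)/ξ² + (b²/2) m K₁(mξ)/ξ ]. -/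
open Real MeasureTheory

lemma sq_div_eight_le_cosh (u : ℝ) : u ^ 2 / 8 ≤ Real.cosh u := by
  have h1 : 1 + |u| / 2 ≤ Real.exp (|u| / 2) := by
    have := Real.add_one_le_exp (|u| / 2); linarith
  have h2 : Real.exp (|u| / 2) * Real.exp (|u| / 2) = Real.exp |u| := by
    rw [← Real.exp_add]; ring_nf
  have h3 : Real.cosh u = (Real.exp |u| + Real.exp (-|u|)) / 2 := by
    rw [← Real.cosh_abs, Real.cosh_eq]
  have h4 : 0 < Real.exp (-|u|) := Real.exp_pos _
  have h5 : (0:ℝ) ≤ |u| := abs_nonneg u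
  have h6 : u ^ 2 = |u| ^ 2 := (sq_abs u).symm
  nlinarith [sq_nonneg (|u| / 2)]

lemma integrable_aux {z : ℝ} (hz : 0 < z) (ν : ℝ) :
    Integrable fun u : ℝ => Real.exp (-z * Real.cosh u) * Real.exp (ν * u) := by
  have hg : Integrable fun u : ℝ =>
      Real.exp (2 * ν ^ 2 / z) * Real.exp (-(z / 8) * (u - 4 * ν / z) ^ 2) := by
    exact ((integrable_exp_neg_mul_sq (by positivity : (0:ℝ) < z / 8)).comp_sub_right
      (4 * ν / z)).const_mul _
  refine hg.mono' (Continuous.aestronglyMeasurable (by continuity)) ?_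
  filter_upwards with u
  rw [Real.norm_eq_abs, abs_of_pos (by positivity), ← Real.exp_add, ← Real.exp_add]
  apply Real.exp_le_exp.2
  have h := sq_div_eight_le_cosh u
  have hkey : 2 * ν ^ 2 / z + -(z / 8) * (u - 4 * ν / z) ^ 2 = ν * u - z * (u ^ 2 / 8) := by
    field_simp; ring
  have h' := mul_le_mul_of_nonneg_left h hz.le
  linarith

lemma integral_exp_mul_eq_two_besselK {z : ℝ} (hz : 0 < z) (μ : ℝ) :
    (∫ u : ℝ, Real.exp (-z * Real.cosh u) * Real.exp (μ * u)) = 2 * besselK μ z := by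
  have hc : Integrable fun u : ℝ => Real.exp (-z * Real.cosh u) * Real.cosh (μ * u) := by
    have := ((integrable_aux hz μ).add (integrable_aux hz (-μ))).div_const 2
    refine this.congr ?_
    filter_upwards with u
    simp only [Pi.add_apply]
    rw [Real.cosh_eq (μ * u), ← neg_mul]
    ring
  have hs : Integrable fun u : ℝ => Real.exp (-z * Real.cosh u) * Real.sinh (μ * u) := by
    have := ((integrable_aux hz μ).sub (integrable_aux hz (-μ))).div_const 2
    refine this.congr ?_
    filter_upwards with u
    simp only [Pi.sub_apply]
    rw [Real.sinh_eq (μ * u), ← neg_mul]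
    ring
  have hsplit : (fun u : ℝ => Real.exp (-z * Real.cosh u) * Real.exp (μ * u)) =
      fun u : ℝ => Real.exp (-z * Real.cosh u) * Real.cosh (μ * u) +
        Real.exp (-z * Real.cosh u) * Real.sinh (μ * u) := by
    funext u; rw [← Real.cosh_add_sinh (μ * u)]; ring
  rw [hsplit, integral_add hc hs]
  have hodd : (∫ u : ℝ, Real.exp (-z * Real.cosh u) * Real.sinh (μ * u)) = 0 := by
    set F : ℝ → ℝ := fun u => Real.exp (-z * Real.cosh u) * Real.sinh (μ * u) with hF
    have h1 : (∫ u : ℝ, F (-u)) = ∫ u : ℝ, F u := integral_neg_eq_self F volume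
    have h2 : ∀ u : ℝ, F (-u) = - F u := by
      intro u
      simp [hF, Real.cosh_neg, mul_neg, Real.sinh_neg]
    have h3 : (∫ u : ℝ, F (-u)) = - ∫ u : ℝ, F u := by
      simp_rw [h2]
      exact integral_neg F
    linarith
  have heven : (∫ u : ℝ, Real.exp (-z * Real.cosh u) * Real.cosh (μ * u)) =
      2 * besselK μ z := by
    have habs : (fun u : ℝ => Real.exp (-z * Real.cosh u) * Real.cosh (μ * u)) =
        fun u : ℝ => (fun y : ℝ => Real.exp (-z * Real.cosh y) * Real.cosh (μ * y)) |u| := by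
      funext u
      rcases le_or_gt 0 u with h | h
      · rw [abs_of_nonneg h]
      · rw [abs_of_neg h]
        simp [Real.cosh_neg, mul_neg]
    rw [habs,
      integral_comp_abs (f := fun y : ℝ => Real.exp (-z * Real.cosh y) * Real.cosh (μ * y))]
    rfl
  rw [hodd, heven, add_zero]

/-- For all `t > 0`, `r ≥ 0`, `m > 0` and `b ≥ 0`, with `ξ := √(t² + r²)`:
`∫₀^∞ e^{-τ} e^{-r²τ/t²} e^{-t²m²/(4τ)} [4τ²/t² + 3bτ + (b²/2)t²] dτ
 = t⁴ [m³ K₃(mξ)/ξ³ + (3/2) b m² K₂(mξ)/ξ² + (b²/2) m K₁(mξ)/ξ]`. -/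
theorem integral_eq_besselK_eval (t r m b ξ : ℝ) (ht : 0 < t) (hr : 0 ≤ r)
    (hm : 0 < m) (hb : 0 ≤ b) (hξ : ξ = Real.sqrt (t ^ 2 + r ^ 2)) :
    (∫ τ in Set.Ioi (0 : ℝ),
        Real.exp (-τ) * Real.exp (-r ^ 2 * τ / t ^ 2) *
          Real.exp (-t ^ 2 * m ^ 2 / (4 * τ)) *
          (4 * τ ^ 2 / t ^ 2 + 3 * b * τ + b ^ 2 / 2 * t ^ 2)) =
      t ^ 4 * (m ^ 3 * besselK 3 (m * ξ) / ξ ^ 3 +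
        3 / 2 * b * m ^ 2 * besselK 2 (m * ξ) / ξ ^ 2 +
        b ^ 2 / 2 * m * besselK 1 (m * ξ) / ξ) := by
  have ht0 : t ≠ 0 := ne_of_gt ht
  have hξpos : 0 < ξ := by
    rw [hξ]; positivity
  have hξ0 : ξ ≠ 0 := ne_of_gt hξpos
  have hξ2 : ξ ^ 2 = t ^ 2 + r ^ 2 := by
    rw [hξ, Real.sq_sqrt (by positivity)]
  set c : ℝ := t ^ 2 * m / (2 * ξ) with hc
  have hcpos : 0 < c := by positivity
  set z : ℝ := m * ξ with hz
  have hzpos : 0 < z := by positivity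
  set g : ℝ → ℝ := fun τ =>
      Real.exp (-τ) * Real.exp (-r ^ 2 * τ / t ^ 2) *
        Real.exp (-t ^ 2 * m ^ 2 / (4 * τ)) *
        (4 * τ ^ 2 / t ^ 2 + 3 * b * τ + b ^ 2 / 2 * t ^ 2) with hg
  have himg : (fun u : ℝ => c * Real.exp u) '' Set.univ = Set.Ioi 0 := by
    rw [Set.image_univ]
    ext x
    simp only [Set.mem_range, Set.mem_Ioi]
    constructor
    · rintro ⟨u, rfl⟩; positivity
    · intro hx
      refine ⟨Real.log (x / c), ?_⟩
      rw [Real.exp_log (by positivity)]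
      field_simp
  have hderiv : ∀ x ∈ Set.univ,
      HasDerivWithinAt (fun u : ℝ => c * Real.exp u) (c * Real.exp x) Set.univ x :=
    fun x _ => ((Real.hasDerivAt_exp x).const_mul c).hasDerivWithinAt
  have hinj : Set.InjOn (fun u : ℝ => c * Real.exp u) Set.univ := by
    intro a _ b' _ h
    simpa using Real.exp_injective (mul_left_cancel₀ (ne_of_gt hcpos) h)
  have hcov := integral_image_eq_integral_abs_deriv_smul MeasurableSet.univ hderiv hinj g
  rw [himg] at hcov
  rw [hcov, Measure.restrict_univ]
  have hpt : (fun x : ℝ => |c * Real.exp x| • g (c * Real.exp x)) =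
      fun u : ℝ => (4 * c ^ 3 / t ^ 2) * (Real.exp (-z * Real.cosh u) * Real.exp (3 * u)) +
        ((3 * b * c ^ 2) * (Real.exp (-z * Real.cosh u) * Real.exp (2 * u)) +
        (b ^ 2 / 2 * t ^ 2 * c) * (Real.exp (-z * Real.cosh u) * Real.exp (1 * u))) := by
    funext u
    have hE : 0 < Real.exp u := Real.exp_pos u
    have hr2 : r ^ 2 = ξ ^ 2 - t ^ 2 := by linarith
    have hexps : Real.exp (-(c * Real.exp u)) *
        Real.exp (-r ^ 2 * (c * Real.exp u) / t ^ 2) *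
        Real.exp (-t ^ 2 * m ^ 2 / (4 * (c * Real.exp u))) =
        Real.exp (-z * Real.cosh u) := by
      rw [← Real.exp_add, ← Real.exp_add]
      congr 1
      rw [Real.cosh_eq, Real.exp_neg]
      have h1 : -(c * Real.exp u) + -r ^ 2 * (c * Real.exp u) / t ^ 2 =
          -(z / 2) * Real.exp u := by
        rw [hc, hz, hr2]
        field_simp
        ring
      have h2 : -t ^ 2 * m ^ 2 / (4 * (c * Real.exp u)) = -(z / 2) * (Real.exp u)⁻¹ := by
        rw [hc, hz]
        field_simp
        ring
      rw [h1, h2]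
      ring
    rw [smul_eq_mul, abs_of_pos (by positivity), hg]
    calc c * Real.exp u *
        (Real.exp (-(c * Real.exp u)) * Real.exp (-r ^ 2 * (c * Real.exp u) / t ^ 2) *
          Real.exp (-t ^ 2 * m ^ 2 / (4 * (c * Real.exp u))) *
          (4 * (c * Real.exp u) ^ 2 / t ^ 2 + 3 * b * (c * Real.exp u) + b ^ 2 / 2 * t ^ 2))
        = Real.exp (-z * Real.cosh u) *
          (c * Real.exp u *
            (4 * (c * Real.exp u) ^ 2 / t ^ 2 + 3 * b * (c * Real.exp u) + b ^ 2 / 2 * t ^ 2)) := by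
          rw [← hexps]; ring
      _ = _ := by
          rw [show (3:ℝ) * u = u + u + u by ring, show (2:ℝ) * u = u + u by ring, one_mul,
            Real.exp_add, Real.exp_add]
          field_simp
          ring
  rw [hpt]
  have i3 := integrable_aux hzpos 3
  have i2 := integrable_aux hzpos 2
  have i1 := integrable_aux hzpos 1
  have h23 : Integrable (fun u : ℝ =>
      (3 * b * c ^ 2) * (Real.exp (-z * Real.cosh u) * Real.exp (2 * u)) +
      (b ^ 2 / 2 * t ^ 2 * c) * (Real.exp (-z * Real.cosh u) * Real.exp (1 * u))) :=
    (i2.const_mul _).add (i1.const_mul _)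
  rw [integral_add (i3.const_mul _) h23, integral_add (i2.const_mul _) (i1.const_mul _),
    integral_const_mul _ _, integral_const_mul _ _, integral_const_mul _ _,
    integral_exp_mul_eq_two_besselK hzpos 3,
    integral_exp_mul_eq_two_besselK hzpos 2,
    integral_exp_mul_eq_two_besselK hzpos 1]
  rw [hc, hz]
  field_simp
  ring
end

section
/- Let K : ℝ³ × ℝ³ → ℂ be measurable with |K(x,y)| ≤ c₀/|x − y|³ for all x ≠ y, and let g₀ : ℝ³ → ℝ be Lipschitz continuous with Lipschitz constant c₁ (e.g. g₀ ∈ C¹ with bounded derivative). Then there is a constant c, depending only on c₀ and c₁, such that for all ψ ∈ L²(ℝ³) and all φ ∈ C_c^∞(ℝ³): | ∫_{ℝ³} ∫_{ℝ³} conj(ψ(x)) · K(x,y) · (g₀(y) − g₀(x)) · (1/|y|) · φ(y) dy dx | ≤ c · ‖ψ‖₂ · ‖φ‖₂. -/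
/-!
Since `|g₀ y - g₀ x| ≤ c₁ |x - y|`, the integrand is dominated by
`c₀ c₁ |ψ x| |x - y|⁻² |y|⁻¹ |φ y|`, so it suffices that the positive kernel `|x - y|⁻² |y|⁻¹`
defines a bounded form on `L²(ℝ³)`. This is the Schur test with the weight `|x|^(-3/2)`: both
weighted row and column integrals are instances of `∫ |w - z|^(-a) |z|^(-b) dz ≤ C |w|^(3 - a - b)`
for `a, b < 3 < a + b`, which follows by splitting space into the balls of radius `|w| / 2` about
`0` and about `w` and their complement, on each of which one factor is bounded and the remaining
radial power is integrated by scaling.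
-/

open MeasureTheory Metric Module Set
open scoped ENNReal NNReal Pointwise

theorem ENNReal.rpow_le_rpow_of_nonpos {x y : ℝ≥0∞} {z : ℝ} (hxy : x ≤ y) (hz : z ≤ 0) :
    y ^ z ≤ x ^ z := by
  obtain ⟨t, rfl⟩ : ∃ t, z = -t := ⟨-z, (neg_neg z).symm⟩
  rw [ENNReal.rpow_neg, ENNReal.rpow_neg]
  exact ENNReal.inv_le_inv.2 (ENNReal.rpow_le_rpow hxy (neg_nonpos.1 hz))

section Schur

variable {α β : Type*} [MeasurableSpace α] [MeasurableSpace β] {μ : Measure α} {ν : Measure β}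
  {N : α → β → ℝ≥0∞} {p : α → ℝ≥0∞} {q : β → ℝ≥0∞}

theorem eLpNorm_two_eq_lintegral_sq (u : α → ℝ≥0∞) :
    eLpNorm u 2 μ = (∫⁻ x, u x ^ 2 ∂μ) ^ (2⁻¹ : ℝ) := by
  rw [eLpNorm_eq_lintegral_rpow_enorm_toReal two_ne_zero ENNReal.ofNat_ne_top]
  simp

variable [SFinite ν]

theorem lintegral_prod_sq_mul_inv_mul_kernel_mul_le {C : ℝ≥0∞} {u : α → ℝ≥0∞}
    (hu : AEMeasurable u μ) (hN : Measurable (Function.uncurry N)) (hp : Measurable p)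
    (hq : Measurable q) (hp_pos : ∀ᵐ x ∂μ, p x ≠ 0 ∧ p x ≠ ∞)
    (hNq : ∀ᵐ x ∂μ, ∫⁻ y, N x y * q y ∂ν ≤ C * p x) :
    ∫⁻ z, u z.1 ^ 2 * (p z.1)⁻¹ * (N z.1 z.2 * q z.2) ∂μ.prod ν ≤ C * ∫⁻ x, u x ^ 2 ∂μ := by
  have hmeas : AEMeasurable (fun z : α × β ↦ u z.1 ^ 2 * (p z.1)⁻¹ * (N z.1 z.2 * q z.2))
      (μ.prod ν) :=
    ((hu.comp_fst.pow_const 2).mul (hp.comp measurable_fst).inv.aemeasurable).mul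
      (hN.mul (hq.comp measurable_snd)).aemeasurable
  calc ∫⁻ z, u z.1 ^ 2 * (p z.1)⁻¹ * (N z.1 z.2 * q z.2) ∂μ.prod ν
      = ∫⁻ x, u x ^ 2 * (p x)⁻¹ * ∫⁻ y, N x y * q y ∂ν ∂μ := by
        rw [lintegral_prod _ hmeas]
        refine lintegral_congr fun x ↦ ?_
        have hsection : Measurable fun y ↦ N x y * q y :=
          (hN.comp measurable_prodMk_left).mul hq
        exact lintegral_const_mul (u x ^ 2 * (p x)⁻¹) hsection
    _ ≤ ∫⁻ x, C * u x ^ 2 ∂μ := by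
        refine lintegral_mono_ae ?_
        filter_upwards [hp_pos, hNq] with x ⟨hp0, hp_top⟩ hx
        calc u x ^ 2 * (p x)⁻¹ * ∫⁻ y, N x y * q y ∂ν ≤ u x ^ 2 * (p x)⁻¹ * (C * p x) := by
              gcongr
          _ = C * u x ^ 2 * ((p x)⁻¹ * p x) := by ring
          _ = C * u x ^ 2 := by rw [ENNReal.inv_mul_cancel hp0 hp_top, mul_one]
    _ = C * ∫⁻ x, u x ^ 2 ∂μ := lintegral_const_mul'' C (hu.pow_const 2)

variable [SFinite μ]

theorem lintegral_lintegral_mul_kernel_mul_le_of_schur {C₁ C₂ : ℝ≥0∞}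
    (hN : Measurable (Function.uncurry N)) (hp : Measurable p) (hq : Measurable q)
    (hp_pos : ∀ᵐ x ∂μ, p x ≠ 0 ∧ p x ≠ ∞) (hq_pos : ∀ᵐ y ∂ν, q y ≠ 0 ∧ q y ≠ ∞)
    (hNq : ∀ᵐ x ∂μ, ∫⁻ y, N x y * q y ∂ν ≤ C₁ * p x)
    (hNp : ∀ᵐ y ∂ν, ∫⁻ x, N x y * p x ∂μ ≤ C₂ * q y)
    {u : α → ℝ≥0∞} {v : β → ℝ≥0∞} (hu : AEMeasurable u μ) (hv : AEMeasurable v ν) :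
    ∫⁻ x, ∫⁻ y, u x * N x y * v y ∂ν ∂μ ≤
      (C₁ * C₂) ^ (2⁻¹ : ℝ) * eLpNorm u 2 μ * eLpNorm v 2 ν := by
  set F : α × β → ℝ≥0∞ := fun z ↦ u z.1 ^ 2 * (p z.1)⁻¹ * (N z.1 z.2 * q z.2)
  set G : α × β → ℝ≥0∞ := fun z ↦ v z.2 ^ 2 * (q z.2)⁻¹ * (N z.1 z.2 * p z.1)
  have hF_le : ∫⁻ z, F z ∂μ.prod ν ≤ C₁ * ∫⁻ x, u x ^ 2 ∂μ :=
    lintegral_prod_sq_mul_inv_mul_kernel_mul_le hu hN hp hq hp_pos hNq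
  have hG_le : ∫⁻ z, G z ∂μ.prod ν ≤ C₂ * ∫⁻ y, v y ^ 2 ∂ν := by
    rw [← lintegral_prod_swap]
    exact lintegral_prod_sq_mul_inv_mul_kernel_mul_le (N := fun y x ↦ N x y) hv
      (hN.comp measurable_swap) hq hp hq_pos hNp
  -- The weights cancel in `F * G`, so `u N v = √F √G` and Cauchy–Schwarz applies.
  have hFG : ∀ᵐ z ∂μ.prod ν,
      u z.1 * N z.1 z.2 * v z.2 = F z ^ (2⁻¹ : ℝ) * G z ^ (2⁻¹ : ℝ) := by
    filter_upwards [Measure.quasiMeasurePreserving_fst.ae hp_pos,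
      Measure.quasiMeasurePreserving_snd.ae hq_pos] with z ⟨hp0, hp_top⟩ ⟨hq0, hq_top⟩
    rw [← ENNReal.mul_rpow_of_nonneg _ _ (by norm_num)]
    have hFG_eq : F z * G z =
        (u z.1 * N z.1 z.2 * v z.2) ^ 2 * ((p z.1)⁻¹ * p z.1) * ((q z.2)⁻¹ * q z.2) := by
      simp only [F, G]
      ring
    rw [hFG_eq, ENNReal.inv_mul_cancel hp0 hp_top, ENNReal.inv_mul_cancel hq0 hq_top, mul_one,
      mul_one]
    exact_mod_cast (ENNReal.pow_rpow_inv_natCast two_ne_zero _).symm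
  have hF : AEMeasurable F (μ.prod ν) :=
    ((hu.comp_fst.pow_const 2).mul (hp.comp measurable_fst).inv.aemeasurable).mul
      (hN.mul (hq.comp measurable_snd)).aemeasurable
  have hG : AEMeasurable G (μ.prod ν) :=
    ((hv.comp_snd.pow_const 2).mul (hq.comp measurable_snd).inv.aemeasurable).mul
      (hN.mul (hp.comp measurable_fst)).aemeasurable
  calc ∫⁻ x, ∫⁻ y, u x * N x y * v y ∂ν ∂μ
      = ∫⁻ z, u z.1 * N z.1 z.2 * v z.2 ∂μ.prod ν :=
        lintegral_lintegral ((hu.comp_fst.mul hN.aemeasurable).mul hv.comp_snd)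
    _ = ∫⁻ z, F z ^ (2⁻¹ : ℝ) * G z ^ (2⁻¹ : ℝ) ∂μ.prod ν := lintegral_congr_ae hFG
    _ ≤ (∫⁻ z, F z ∂μ.prod ν) ^ (2⁻¹ : ℝ) * (∫⁻ z, G z ∂μ.prod ν) ^ (2⁻¹ : ℝ) :=
        ENNReal.lintegral_mul_norm_pow_le hF hG (by norm_num) (by norm_num) (by norm_num)
    _ ≤ (C₁ * ∫⁻ x, u x ^ 2 ∂μ) ^ (2⁻¹ : ℝ) * (C₂ * ∫⁻ y, v y ^ 2 ∂ν) ^ (2⁻¹ : ℝ) := by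
        gcongr
    _ = (C₁ * C₂) ^ (2⁻¹ : ℝ) * eLpNorm u 2 μ * eLpNorm v 2 ν := by
        simp only [eLpNorm_two_eq_lintegral_sq,
          ENNReal.mul_rpow_of_nonneg _ _ (by norm_num : (0 : ℝ) ≤ 2⁻¹)]
        ring

end Schur

section PowerWeights

variable {E : Type*} [NormedAddCommGroup E] [NormedSpace ℝ E] [MeasurableSpace E] [BorelSpace E]
  [FiniteDimensional ℝ E] {μ : Measure E} [μ.IsAddHaarMeasure]

theorem setLIntegral_smul_enorm_rpow_neg {S : Set E} {r : ℝ} (hr : 0 < r) (s : ℝ) :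
    ∫⁻ z in r • S, ‖z‖ₑ ^ (-s) ∂μ =
      ENNReal.ofReal r ^ ((finrank ℝ E : ℝ) - s) * ∫⁻ z in S, ‖z‖ₑ ^ (-s) ∂μ := by
  set e : E ≃ᵐ E := MeasurableEquiv.smul₀ r hr.ne'
  have hμ : μ = ENNReal.ofReal (r ^ finrank ℝ E) • μ.map e := by
    rw [show ⇑e = (r • ·) from rfl, Measure.map_addHaar_smul μ hr.ne', smul_smul,
      ← ENNReal.ofReal_mul (by positivity), abs_of_pos (by positivity),
      mul_inv_cancel₀ (by positivity), ENNReal.ofReal_one, one_smul]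
  have hpre : e ⁻¹' (r • S) = S := by
    ext x
    simp [e, Set.smul_mem_smul_set_iff₀ hr.ne']
  have hr_ne : ENNReal.ofReal r ≠ 0 := by simpa using hr
  calc ∫⁻ z in r • S, ‖z‖ₑ ^ (-s) ∂μ
      = ENNReal.ofReal (r ^ finrank ℝ E) * ∫⁻ x in S, ‖r • x‖ₑ ^ (-s) ∂μ := by
        conv_lhs => rw [hμ]
        rw [Measure.restrict_smul, lintegral_smul_measure, e.restrict_map, lintegral_map_equiv,
          hpre, smul_eq_mul]
        rfl
    _ = ENNReal.ofReal (r ^ finrank ℝ E) *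
          ∫⁻ x in S, ENNReal.ofReal r ^ (-s) * ‖x‖ₑ ^ (-s) ∂μ := by
        congr 1
        refine lintegral_congr fun x ↦ ?_
        rw [enorm_smul, Real.enorm_of_nonneg hr.le,
          ENNReal.mul_rpow_of_ne_top ENNReal.ofReal_ne_top enorm_ne_top]
    _ = ENNReal.ofReal r ^ ((finrank ℝ E : ℝ) - s) * ∫⁻ z in S, ‖z‖ₑ ^ (-s) ∂μ := by
        rw [lintegral_const_mul' _ _ (by simp [ENNReal.rpow_eq_top_iff, hr_ne]), ← mul_assoc,
          ENNReal.ofReal_pow hr.le, ← ENNReal.rpow_natCast,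
          ← ENNReal.rpow_add _ _ hr_ne ENNReal.ofReal_ne_top, ← sub_eq_add_neg]

theorem setLIntegral_ball_enorm_rpow_neg {r : ℝ} (hr : 0 < r) (s : ℝ) :
    ∫⁻ z in ball 0 r, ‖z‖ₑ ^ (-s) ∂μ =
      ENNReal.ofReal r ^ ((finrank ℝ E : ℝ) - s) * ∫⁻ z in ball 0 1, ‖z‖ₑ ^ (-s) ∂μ := by
  rw [← smul_unitBall_of_pos hr, setLIntegral_smul_enorm_rpow_neg hr]

theorem setLIntegral_compl_ball_enorm_rpow_neg {r : ℝ} (hr : 0 < r) (s : ℝ) :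
    ∫⁻ z in (ball 0 r)ᶜ, ‖z‖ₑ ^ (-s) ∂μ =
      ENNReal.ofReal r ^ ((finrank ℝ E : ℝ) - s) * ∫⁻ z in (ball 0 1)ᶜ, ‖z‖ₑ ^ (-s) ∂μ := by
  have : r • (ball (0 : E) 1)ᶜ = (ball 0 r)ᶜ := by
    rw [← smul_unitBall_of_pos hr]
    exact Set.smul_set_compl (a := Units.mk0 r hr.ne')
  rw [← this, setLIntegral_smul_enorm_rpow_neg hr]

theorem setLIntegral_unitBall_enorm_rpow_neg_lt_top [Nontrivial E] {s : ℝ}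
    (hs : s < finrank ℝ E) : ∫⁻ z in ball 0 1, ‖z‖ₑ ^ (-s) ∂μ < ∞ := by
  have hint : IntegrableOn (fun z : E ↦ ‖z‖ ^ (-s)) (ball 0 1) μ := by
    refine (integrableOn_fun_norm_addHaar μ (f := fun t ↦ t ^ (-s))).2 ?_
    have h1d : IntegrableOn (fun t : ℝ ↦ t ^ ((finrank ℝ E : ℝ) - 1 - s)) (Ioo 0 1) :=
      (intervalIntegral.integrableOn_Ioo_rpow_iff one_pos).2 (by linarith)
    refine h1d.congr_fun (fun t ht ↦ ?_) measurableSet_Ioo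
    have hfin : 1 ≤ finrank ℝ E := Module.finrank_pos
    rw [smul_eq_mul, ← Real.rpow_natCast, ← Real.rpow_add ht.1, Nat.cast_sub hfin]
    push_cast
    ring_nf
  refine lt_of_eq_of_lt (setLIntegral_congr_fun_ae measurableSet_ball ?_) hint.setLIntegral_lt_top
  filter_upwards [Measure.ae_ne μ 0] with z hz _
  rw [← ENNReal.ofReal_rpow_of_pos (norm_pos_iff.2 hz), ofReal_norm]

theorem setLIntegral_compl_unitBall_enorm_rpow_neg_lt_top {s : ℝ}
    (hs : finrank ℝ E < s) : ∫⁻ z in (ball 0 1)ᶜ, ‖z‖ₑ ^ (-s) ∂μ < ∞ := by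
  have hs0 : 0 < s := lt_of_le_of_lt (Nat.cast_nonneg _) hs
  have hbound : ∀ z ∈ (ball (0 : E) 1)ᶜ,
      ‖z‖ₑ ^ (-s) ≤ ENNReal.ofReal (2 ^ s) * ENNReal.ofReal ((1 + ‖z‖) ^ (-s)) := by
    intro z hz
    have hz1 : 1 ≤ ‖z‖ := by simpa using hz
    rw [← ENNReal.ofReal_mul (by positivity), ← ofReal_norm,
      ENNReal.ofReal_rpow_of_pos (by linarith)]
    refine ENNReal.ofReal_le_ofReal ?_
    calc ‖z‖ ^ (-s) = 2 ^ s * (2 * ‖z‖) ^ (-s) := by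
          rw [Real.mul_rpow zero_le_two (norm_nonneg z), ← mul_assoc, ← Real.rpow_add two_pos,
            add_neg_cancel, Real.rpow_zero, one_mul]
      _ ≤ 2 ^ s * (1 + ‖z‖) ^ (-s) := by
          refine mul_le_mul_of_nonneg_left ?_ (by positivity)
          exact Real.rpow_le_rpow_of_nonpos (by positivity) (by linarith) (by linarith)
  calc ∫⁻ z in (ball 0 1)ᶜ, ‖z‖ₑ ^ (-s) ∂μ
      ≤ ∫⁻ z in (ball 0 1)ᶜ, ENNReal.ofReal (2 ^ s) * ENNReal.ofReal ((1 + ‖z‖) ^ (-s)) ∂μ :=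
        setLIntegral_mono' measurableSet_ball.compl hbound
    _ ≤ ∫⁻ z, ENNReal.ofReal (2 ^ s) * ENNReal.ofReal ((1 + ‖z‖) ^ (-s)) ∂μ :=
        setLIntegral_le_lintegral _ _
    _ < ∞ := by
        rw [lintegral_const_mul' _ _ ENNReal.ofReal_ne_top]
        exact ENNReal.mul_lt_top ENNReal.ofReal_lt_top (integrable_one_add_norm hs).lintegral_lt_top

theorem setLIntegral_ball_enorm_sub_rpow_neg (w : E) (r s : ℝ) :
    ∫⁻ z in ball w r, ‖w - z‖ₑ ^ (-s) ∂μ = ∫⁻ z in ball 0 r, ‖z‖ₑ ^ (-s) ∂μ := by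
  rw [← lintegral_indicator measurableSet_ball, ← lintegral_indicator measurableSet_ball,
    ← lintegral_sub_left_eq_self _ w]
  congr with z
  simp [Set.indicator, dist_eq_norm]

variable {a b ρ : ℝ} {w : E}

theorem setLIntegral_ball_zero_enorm_sub_rpow_neg_mul_le (ha : 0 ≤ a) (hρ : 0 < ρ)
    (hw : 2 * ρ ≤ ‖w‖) :
    ∫⁻ z in ball 0 ρ, ‖w - z‖ₑ ^ (-a) * ‖z‖ₑ ^ (-b) ∂μ ≤
      ENNReal.ofReal ρ ^ ((finrank ℝ E : ℝ) - a - b) * ∫⁻ z in ball 0 1, ‖z‖ₑ ^ (-b) ∂μ := by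
  have hbound : ∀ z ∈ ball (0 : E) ρ,
      ‖w - z‖ₑ ^ (-a) * ‖z‖ₑ ^ (-b) ≤ ENNReal.ofReal ρ ^ (-a) * ‖z‖ₑ ^ (-b) := by
    intro z hz
    refine mul_le_mul_left (ENNReal.rpow_le_rpow_of_nonpos ?_ (neg_nonpos.2 ha)) _
    rw [← ofReal_norm]
    refine ENNReal.ofReal_le_ofReal ?_
    have := norm_sub_norm_le w z
    rw [mem_ball_zero_iff] at hz
    linarith
  calc ∫⁻ z in ball 0 ρ, ‖w - z‖ₑ ^ (-a) * ‖z‖ₑ ^ (-b) ∂μ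
      ≤ ∫⁻ z in ball 0 ρ, ENNReal.ofReal ρ ^ (-a) * ‖z‖ₑ ^ (-b) ∂μ :=
        setLIntegral_mono' measurableSet_ball hbound
    _ = ENNReal.ofReal ρ ^ (-a) * ENNReal.ofReal ρ ^ ((finrank ℝ E : ℝ) - b) *
          ∫⁻ z in ball 0 1, ‖z‖ₑ ^ (-b) ∂μ := by
        rw [lintegral_const_mul _ (by fun_prop), setLIntegral_ball_enorm_rpow_neg hρ, mul_assoc]
    _ = _ := by
        rw [← ENNReal.rpow_add _ _ (by simpa using hρ) ENNReal.ofReal_ne_top]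
        ring_nf

theorem setLIntegral_ball_enorm_sub_rpow_neg_mul_le (hb : 0 ≤ b) (hρ : 0 < ρ)
    (hw : 2 * ρ ≤ ‖w‖) :
    ∫⁻ z in ball w ρ, ‖w - z‖ₑ ^ (-a) * ‖z‖ₑ ^ (-b) ∂μ ≤
      ENNReal.ofReal ρ ^ ((finrank ℝ E : ℝ) - a - b) * ∫⁻ z in ball 0 1, ‖z‖ₑ ^ (-a) ∂μ := by
  have hbound : ∀ z ∈ ball w ρ,
      ‖w - z‖ₑ ^ (-a) * ‖z‖ₑ ^ (-b) ≤ ENNReal.ofReal ρ ^ (-b) * ‖w - z‖ₑ ^ (-a) := by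
    intro z hz
    rw [mul_comm]
    refine mul_le_mul_left (ENNReal.rpow_le_rpow_of_nonpos ?_ (neg_nonpos.2 hb)) _
    rw [← ofReal_norm]
    refine ENNReal.ofReal_le_ofReal ?_
    have := norm_sub_norm_le w (w - z)
    rw [mem_ball, dist_eq_norm, ← norm_neg, neg_sub] at hz
    rw [sub_sub_cancel] at this
    linarith
  calc ∫⁻ z in ball w ρ, ‖w - z‖ₑ ^ (-a) * ‖z‖ₑ ^ (-b) ∂μ
      ≤ ∫⁻ z in ball w ρ, ENNReal.ofReal ρ ^ (-b) * ‖w - z‖ₑ ^ (-a) ∂μ :=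
        setLIntegral_mono' measurableSet_ball hbound
    _ = ENNReal.ofReal ρ ^ (-b) * ENNReal.ofReal ρ ^ ((finrank ℝ E : ℝ) - a) *
          ∫⁻ z in ball 0 1, ‖z‖ₑ ^ (-a) ∂μ := by
        rw [lintegral_const_mul _ (by fun_prop), setLIntegral_ball_enorm_sub_rpow_neg,
          setLIntegral_ball_enorm_rpow_neg hρ, mul_assoc]
    _ = _ := by
        rw [← ENNReal.rpow_add _ _ (by simpa using hρ) ENNReal.ofReal_ne_top]
        ring_nf

theorem setLIntegral_compl_union_ball_enorm_sub_rpow_neg_mul_le (ha : 0 ≤ a) (hρ : 0 < ρ)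
    (hw : ‖w‖ ≤ 2 * ρ) :
    ∫⁻ z in (ball 0 ρ ∪ ball w ρ)ᶜ, ‖w - z‖ₑ ^ (-a) * ‖z‖ₑ ^ (-b) ∂μ ≤
      ENNReal.ofReal ρ ^ ((finrank ℝ E : ℝ) - a - b) *
        (3 ^ a * ∫⁻ z in (ball 0 1)ᶜ, ‖z‖ₑ ^ (-(a + b)) ∂μ) := by
  have hbound : ∀ z ∈ (ball (0 : E) ρ ∪ ball w ρ)ᶜ,
      ‖w - z‖ₑ ^ (-a) * ‖z‖ₑ ^ (-b) ≤ 3 ^ a * ‖z‖ₑ ^ (-(a + b)) := by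
    intro z hz
    rw [compl_union] at hz
    obtain ⟨hz, hzw⟩ := hz
    rw [mem_compl_iff, mem_ball_zero_iff, not_lt] at hz
    rw [mem_compl_iff, mem_ball, dist_eq_norm, ← norm_neg, neg_sub, not_lt] at hzw
    have hz0 : ‖z‖ₑ ≠ 0 := by
      rw [← ofReal_norm, ENNReal.ofReal_ne_zero_iff]
      linarith
    have hfar : ‖z‖ₑ ≤ 3 * ‖w - z‖ₑ := by
      rw [← ofReal_norm, ← ofReal_norm, ← ENNReal.ofReal_ofNat 3,
        ← ENNReal.ofReal_mul zero_le_three]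
      refine ENNReal.ofReal_le_ofReal ?_
      have := norm_sub_le w (w - z)
      rw [sub_sub_cancel] at this
      linarith
    calc ‖w - z‖ₑ ^ (-a) * ‖z‖ₑ ^ (-b) = 3 ^ a * (3 * ‖w - z‖ₑ) ^ (-a) * ‖z‖ₑ ^ (-b) := by
          rw [ENNReal.mul_rpow_of_ne_top ENNReal.ofNat_ne_top enorm_ne_top, ← mul_assoc,
            ← ENNReal.rpow_add _ _ three_ne_zero ENNReal.ofNat_ne_top, add_neg_cancel,
            ENNReal.rpow_zero, one_mul]
      _ ≤ 3 ^ a * ‖z‖ₑ ^ (-a) * ‖z‖ₑ ^ (-b) := by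
          gcongr 3 ^ a * ?_ * _
          exact ENNReal.rpow_le_rpow_of_nonpos hfar (neg_nonpos.2 ha)
      _ = 3 ^ a * ‖z‖ₑ ^ (-(a + b)) := by
          rw [mul_assoc, ← ENNReal.rpow_add _ _ hz0 enorm_ne_top, neg_add]
  calc ∫⁻ z in (ball 0 ρ ∪ ball w ρ)ᶜ, ‖w - z‖ₑ ^ (-a) * ‖z‖ₑ ^ (-b) ∂μ
      ≤ ∫⁻ z in (ball 0 ρ ∪ ball w ρ)ᶜ, 3 ^ a * ‖z‖ₑ ^ (-(a + b)) ∂μ :=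
        setLIntegral_mono' (measurableSet_ball.union measurableSet_ball).compl hbound
    _ ≤ ∫⁻ z in (ball 0 ρ)ᶜ, 3 ^ a * ‖z‖ₑ ^ (-(a + b)) ∂μ :=
        lintegral_mono_set (compl_subset_compl.2 subset_union_left)
    _ = _ := by
        rw [lintegral_const_mul _ (by fun_prop), setLIntegral_compl_ball_enorm_rpow_neg hρ]
        ring_nf

theorem exists_lintegral_enorm_sub_rpow_neg_mul_enorm_rpow_neg_le [Nontrivial E] (ha : 0 ≤ a)
    (ha' : a < finrank ℝ E) (hb : 0 ≤ b) (hb' : b < finrank ℝ E) (hab : finrank ℝ E < a + b) :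
    ∃ C < ∞, ∀ w : E, w ≠ 0 →
      ∫⁻ z, ‖w - z‖ₑ ^ (-a) * ‖z‖ₑ ^ (-b) ∂μ ≤ C * ‖w‖ₑ ^ ((finrank ℝ E : ℝ) - a - b) := by
  set e : ℝ := (finrank ℝ E : ℝ) - a - b
  set A : ℝ≥0∞ := ∫⁻ z in ball 0 1, ‖z‖ₑ ^ (-b) ∂μ + ∫⁻ z in ball 0 1, ‖z‖ₑ ^ (-a) ∂μ +
    3 ^ a * ∫⁻ z in (ball 0 1)ᶜ, ‖z‖ₑ ^ (-(a + b)) ∂μ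
  have hA : A < ∞ := by
    have := setLIntegral_unitBall_enorm_rpow_neg_lt_top (μ := μ) ha'
    have := setLIntegral_unitBall_enorm_rpow_neg_lt_top (μ := μ) hb'
    have := setLIntegral_compl_unitBall_enorm_rpow_neg_lt_top (μ := μ) hab
    finiteness
  have he : 0 ≤ -e := by linarith
  refine ⟨2 ^ (-e) * A, ENNReal.mul_lt_top (ENNReal.rpow_lt_top_of_nonneg he (by simp)) hA,
    fun w hw ↦ ?_⟩
  set ρ := ‖w‖ / 2
  have hρ : 0 < ρ := by positivity
  have hwρ : ‖w‖ = 2 * ρ := by ring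
  have hρw : ENNReal.ofReal ρ ^ e = 2 ^ (-e) * ‖w‖ₑ ^ e := by
    rw [show ρ = 2⁻¹ * ‖w‖ by ring, ENNReal.ofReal_mul (by norm_num), ofReal_norm,
      ENNReal.ofReal_inv_of_pos two_pos, ENNReal.ofReal_ofNat,
      ENNReal.mul_rpow_of_ne_top (by simp) enorm_ne_top, ENNReal.rpow_neg, ENNReal.inv_rpow]
  calc ∫⁻ z, ‖w - z‖ₑ ^ (-a) * ‖z‖ₑ ^ (-b) ∂μ
      ≤ ∫⁻ z in ball 0 ρ, ‖w - z‖ₑ ^ (-a) * ‖z‖ₑ ^ (-b) ∂μ +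
          ∫⁻ z in ball w ρ, ‖w - z‖ₑ ^ (-a) * ‖z‖ₑ ^ (-b) ∂μ +
          ∫⁻ z in (ball 0 ρ ∪ ball w ρ)ᶜ, ‖w - z‖ₑ ^ (-a) * ‖z‖ₑ ^ (-b) ∂μ := by
        rw [← setLIntegral_univ, ← union_compl_self (ball 0 ρ ∪ ball w ρ)]
        exact (lintegral_union_le _ _ _).trans (add_le_add_left (lintegral_union_le _ _ _) _)
    _ ≤ ENNReal.ofReal ρ ^ e * A := by
        rw [mul_add, mul_add]
        gcongr
        · exact setLIntegral_ball_zero_enorm_sub_rpow_neg_mul_le ha hρ hwρ.ge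
        · exact setLIntegral_ball_enorm_sub_rpow_neg_mul_le hb hρ hwρ.ge
        · exact setLIntegral_compl_union_ball_enorm_sub_rpow_neg_mul_le ha hρ hwρ.le
    _ = 2 ^ (-e) * A * ‖w‖ₑ ^ e := by rw [hρw]; ring

theorem exists_lintegral_lintegral_mul_enorm_sub_rpow_neg_mul_enorm_rpow_neg_le [Nontrivial E]
    (hb : 0 < b) (hb' : b < finrank ℝ E / 2) (hab : a + b = finrank ℝ E) :
    ∃ C < ∞, ∀ u v : E → ℝ≥0∞, AEMeasurable u μ → AEMeasurable v μ →
      ∫⁻ x, ∫⁻ y, u x * (‖x - y‖ₑ ^ (-a) * ‖y‖ₑ ^ (-b)) * v y ∂μ ∂μ ≤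
        C * eLpNorm u 2 μ * eLpNorm v 2 μ := by
  set n : ℝ := (finrank ℝ E : ℝ)
  obtain ⟨C₁, hC₁, h₁⟩ := exists_lintegral_enorm_sub_rpow_neg_mul_enorm_rpow_neg_le (μ := μ)
    (a := a) (b := b + n / 2) (by linarith) (by linarith) (by linarith) (by linarith) (by linarith)
  obtain ⟨C₂, hC₂, h₂⟩ := exists_lintegral_enorm_sub_rpow_neg_mul_enorm_rpow_neg_le (μ := μ)
    (a := a) (b := n / 2) (by linarith) (by linarith) (by linarith) (by linarith) (by linarith)
  have hC : (C₁ * C₂) ^ (2⁻¹ : ℝ) < ∞ :=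
    ENNReal.rpow_lt_top_of_nonneg (by norm_num) (ENNReal.mul_lt_top hC₁ hC₂).ne
  refine ⟨(C₁ * C₂) ^ (2⁻¹ : ℝ), hC, fun u v hu hv ↦ ?_⟩
  set p : E → ℝ≥0∞ := fun x ↦ ‖x‖ₑ ^ (-(n / 2))
  have hp_pos : ∀ᵐ x ∂μ, p x ≠ 0 ∧ p x ≠ ∞ := by
    filter_upwards [Measure.ae_ne μ 0] with x hx
    simp [p, ENNReal.rpow_eq_zero_iff, ENNReal.rpow_eq_top_iff, hx]
  refine lintegral_lintegral_mul_kernel_mul_le_of_schur (p := p) (q := p)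
    (by fun_prop) (by fun_prop) (by fun_prop) hp_pos hp_pos ?_ ?_ hu hv
  · filter_upwards [Measure.ae_ne μ 0] with x hx
    calc ∫⁻ y, ‖x - y‖ₑ ^ (-a) * ‖y‖ₑ ^ (-b) * p y ∂μ
        = ∫⁻ y, ‖x - y‖ₑ ^ (-a) * ‖y‖ₑ ^ (-(b + n / 2)) ∂μ := by
          refine lintegral_congr_ae ?_
          filter_upwards [Measure.ae_ne μ 0] with y hy
          rw [mul_assoc, ← ENNReal.rpow_add _ _ (enorm_ne_zero.2 hy) enorm_ne_top, neg_add]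
      _ ≤ C₁ * p x := by
          convert h₁ x hx using 3
          linarith
  · filter_upwards [Measure.ae_ne μ 0] with y hy
    calc ∫⁻ x, ‖x - y‖ₑ ^ (-a) * ‖y‖ₑ ^ (-b) * p x ∂μ
        = ‖y‖ₑ ^ (-b) * ∫⁻ x, ‖y - x‖ₑ ^ (-a) * ‖x‖ₑ ^ (-(n / 2)) ∂μ := by
          rw [← lintegral_const_mul _ (by fun_prop)]
          refine lintegral_congr fun x ↦ ?_
          rw [← enorm_neg, neg_sub]
          ring
      _ ≤ ‖y‖ₑ ^ (-b) * (C₂ * ‖y‖ₑ ^ (n - a - n / 2)) := by gcongr; exact h₂ y hy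
      _ = C₂ * p y := by
          rw [mul_left_comm, ← ENNReal.rpow_add _ _ (enorm_ne_zero.2 hy) enorm_ne_top]
          congr 2
          linarith

theorem enorm_integral_integral_le_lintegral_lintegral_enorm {α β G : Type*}
    [MeasurableSpace α] [MeasurableSpace β] [NormedAddCommGroup G] [NormedSpace ℝ G]
    {μ : Measure α} {ν : Measure β} (f : α → β → G) :
    ‖∫ x, ∫ y, f x y ∂ν ∂μ‖ₑ ≤ ∫⁻ x, ∫⁻ y, ‖f x y‖ₑ ∂ν ∂μ :=
  (enorm_integral_le_lintegral_enorm _).trans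
    (lintegral_mono fun _ ↦ enorm_integral_le_lintegral_enorm _)

section Commutator

variable {X : Type*} [NormedAddCommGroup X] {K : X × X → ℂ} {g : X → ℝ} {c₀ : ℝ} {c₁ : ℝ≥0}
  {k : ℕ}

theorem enorm_kernel_mul_lipschitz_sub_le (hK : ∀ x y, x ≠ y → ‖K (x, y)‖ ≤ c₀ / ‖x - y‖ ^ k)
    (hg : LipschitzWith c₁ g) (x y : X) :
    ‖K (x, y) * ((g y - g x : ℝ) : ℂ)‖ₑ ≤ ENNReal.ofReal c₀ * c₁ * ‖x - y‖ₑ ^ (1 - k : ℝ) := by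
  rcases eq_or_ne x y with rfl | hxy
  · simp
  have hd0 : ‖x - y‖ₑ ≠ 0 := by simpa [sub_eq_zero] using hxy
  have hK' : ‖K (x, y)‖ₑ ≤ ENNReal.ofReal c₀ * ‖x - y‖ₑ ^ (-k : ℝ) := by
    rw [← ofReal_norm, ← ofReal_norm, ENNReal.rpow_neg, ENNReal.rpow_natCast,
      ← ENNReal.ofReal_pow (norm_nonneg _),
      ← ENNReal.ofReal_inv_of_pos (pow_pos (norm_pos_iff.2 (sub_ne_zero.2 hxy)) k),
      ← ENNReal.ofReal_mul' (by positivity)]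
    exact ENNReal.ofReal_le_ofReal (hK x y hxy)
  have hg' : ‖((g y - g x : ℝ) : ℂ)‖ₑ ≤ c₁ * ‖x - y‖ₑ := by
    rw [← ofReal_norm, Complex.norm_real, ofReal_norm, ← edist_eq_enorm_sub,
      ← edist_eq_enorm_sub, edist_comm x]
    exact hg.edist_le_mul y x
  calc ‖K (x, y) * ((g y - g x : ℝ) : ℂ)‖ₑ
      ≤ ENNReal.ofReal c₀ * ‖x - y‖ₑ ^ (-k : ℝ) * (c₁ * ‖x - y‖ₑ) := by
        rw [enorm_mul]
        gcongr
    _ = ENNReal.ofReal c₀ * c₁ * ‖x - y‖ₑ ^ (1 - k : ℝ) := by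
        rw [show (1 - k : ℝ) = 1 + -k by ring, ENNReal.rpow_add _ _ hd0 enorm_ne_top,
          ENNReal.rpow_one]
        ring

theorem enorm_commutator_coulomb_integrand_le
    (hK : ∀ x y, x ≠ y → ‖K (x, y)‖ ≤ c₀ / ‖x - y‖ ^ k) (hg : LipschitzWith c₁ g)
    (ψ φ : X → ℂ) (x y : X) :
    ‖(starRingEnd ℂ) (ψ x) * K (x, y) * ((g y - g x : ℝ) : ℂ) * ((1 / ‖y‖ : ℝ) : ℂ) * φ y‖ₑ ≤
      ENNReal.ofReal c₀ * c₁ *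
        (‖ψ x‖ₑ * (‖x - y‖ₑ ^ (1 - k : ℝ) * ‖y‖ₑ ^ (-1 : ℝ)) * ‖φ y‖ₑ) := by
  have hcoulomb : ‖((1 / ‖y‖ : ℝ) : ℂ)‖ₑ ≤ ‖y‖ₑ ^ (-1 : ℝ) := by
    rw [← ofReal_norm, Complex.norm_real, Real.norm_of_nonneg (by positivity), one_div,
      ENNReal.rpow_neg_one, ← ofReal_norm]
    exact ENNReal.ofReal_inv_le
  calc _ = ‖ψ x‖ₑ * ‖K (x, y) * ((g y - g x : ℝ) : ℂ)‖ₑ * ‖((1 / ‖y‖ : ℝ) : ℂ)‖ₑ * ‖φ y‖ₑ := by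
        simp only [enorm_mul, RCLike.enorm_conj]
        ring
    _ ≤ ‖ψ x‖ₑ * (ENNReal.ofReal c₀ * c₁ * ‖x - y‖ₑ ^ (1 - k : ℝ)) * ‖y‖ₑ ^ (-1 : ℝ) * ‖φ y‖ₑ := by
        gcongr
        exact enorm_kernel_mul_lipschitz_sub_le hK hg x y
    _ = _ := by ring

end Commutator

/-- Let `K : ℝ³ × ℝ³ → ℂ` be measurable with `|K(x,y)| ≤ c₀/|x-y|³` for `x ≠ y`, and let
`g₀ : ℝ³ → ℝ` be Lipschitz with constant `c₁`. Then there is a constant `c`, depending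
only on `c₀` and `c₁`, such that for all `ψ ∈ L²(ℝ³)` and all `φ ∈ C_c^∞(ℝ³)`:
`|∫∫ conj(ψ(x)) K(x,y) (g₀(y) - g₀(x)) (1/|y|) φ(y) dy dx| ≤ c ‖ψ‖₂ ‖φ‖₂`. -/
theorem commutator_coulomb_form_bound (c₀ : ℝ) (c₁ : NNReal) :
    ∃ c : ℝ, ∀ (K : EuclideanSpace ℝ (Fin 3) × EuclideanSpace ℝ (Fin 3) → ℂ)
      (g₀ : EuclideanSpace ℝ (Fin 3) → ℝ),
      Measurable K →
      (∀ x y : EuclideanSpace ℝ (Fin 3), x ≠ y → ‖K (x, y)‖ ≤ c₀ / ‖x - y‖ ^ 3) →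
      LipschitzWith c₁ g₀ →
      ∀ ψ φ : EuclideanSpace ℝ (Fin 3) → ℂ,
        MemLp ψ 2 volume → ContDiff ℝ (⊤ : ℕ∞) φ → HasCompactSupport φ →
        ‖∫ x, ∫ y, (starRingEnd ℂ) (ψ x) * K (x, y) * ((g₀ y - g₀ x : ℝ) : ℂ) *
            ((1 / ‖y‖ : ℝ) : ℂ) * φ y‖ ≤
          c * (eLpNorm ψ 2 volume).toReal * (eLpNorm φ 2 volume).toReal := by
  obtain ⟨C, hC, hform⟩ := exists_lintegral_lintegral_mul_enorm_sub_rpow_neg_mul_enorm_rpow_neg_le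
    (μ := (volume : Measure (EuclideanSpace ℝ (Fin 3)))) (a := 2) (b := 1) one_pos
    (by norm_num) (by norm_num)
  set D : ℝ≥0∞ := ENNReal.ofReal c₀ * c₁
  refine ⟨(D * C).toReal, fun K g₀ _ hK hg ψ φ hψ hφ hφc ↦ ?_⟩
  have hφ2 : MemLp φ 2 volume := hφ.continuous.memLp_of_hasCompactSupport hφc
  have hle := calc
    ‖∫ x, ∫ y, (starRingEnd ℂ) (ψ x) * K (x, y) * ((g₀ y - g₀ x : ℝ) : ℂ) *
        ((1 / ‖y‖ : ℝ) : ℂ) * φ y‖ₑ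
      ≤ ∫⁻ x, ∫⁻ y, D * (‖ψ x‖ₑ * (‖x - y‖ₑ ^ (-2 : ℝ) * ‖y‖ₑ ^ (-1 : ℝ)) * ‖φ y‖ₑ) := by
        refine (enorm_integral_integral_le_lintegral_lintegral_enorm _).trans ?_
        refine lintegral_mono fun x ↦ lintegral_mono fun y ↦ ?_
        convert enorm_commutator_coulomb_integrand_le hK hg ψ φ x y using 5
        norm_num
    _ = D * ∫⁻ x, ∫⁻ y, ‖ψ x‖ₑ * (‖x - y‖ₑ ^ (-2 : ℝ) * ‖y‖ₑ ^ (-1 : ℝ)) * ‖φ y‖ₑ := by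
        simp only [lintegral_const_mul' _ _ (by finiteness : D ≠ ∞)]
    _ ≤ D * (C * eLpNorm ψ 2 volume * eLpNorm φ 2 volume) := by
        gcongr
        simpa only [eLpNorm_enorm] using hform _ _ hψ.1.enorm hφ2.1.enorm
  rw [← toReal_enorm, ← ENNReal.toReal_mul, ← ENNReal.toReal_mul, mul_assoc D, mul_assoc D]
  exact ENNReal.toReal_mono (by finiteness [hψ.eLpNorm_lt_top, hφ2.eLpNorm_lt_top]) hle
end PowerWeights
end

section
/- Let K : ℝ³ × ℝ³ → ℂ be measurable with |K(x,y)| ≤ c₀/|x − y|³ for all x ≠ y, let g₀ : ℝ³ → ℝ be Lipschitz continuous with Lipschitz constant c₁, let R > 1, and set g(x) := g₀(x/R). Then there is a constant c, depending only on c₀ and c₁ (not on R), such that for all ψ ∈ L²(ℝ³) and all φ ∈ C_c^∞(ℝ³): | ∫_{ℝ³} ∫_{ℝ³} conj(ψ(x)) · K(x,y) · (g(y) − g(x)) · (1/|y|) · φ(y) dy dx | ≤ (c/R) · ‖ψ‖₂ · ‖φ‖₂. -/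
/-!
Since `y ↦ g₀ (R⁻¹ • y)` is `c₁ / R`-Lipschitz, the kernel of the commutator is bounded by
`|c₀| c₁ R⁻¹ |x - y|⁻²`, so it suffices that the positive kernel `|x - y|⁻² |y|⁻¹` defines a
bounded operator on `L²(ℝ³)`. This is Schur's test with the weight `|x|^(-3/2)`, which comes down
to the estimate `∫ |x - y|^(-b) |y|^(-a) dy ≤ C |x|^(n - a - b)` for `a, b < n < a + b`.
By homogeneity it suffices to take `|x| = 1`, and there the integrand is dominated by integrable
powers of `|y - x|` near `x`, of `|y|` near `0`, and of `|y|` near infinity.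
-/

open Real MeasureTheory

open scoped ENNReal

open Metric Set Module

section SchurTest

variable {α β : Type*} [MeasurableSpace α] [MeasurableSpace β] {μ : Measure α} {ν : Measure β}

lemma lintegral_rpow_half_mul_rpow_half_le {F G : α → ℝ≥0∞} (hF : AEMeasurable F μ)
    (hG : AEMeasurable G μ) :
    ∫⁻ x, F x ^ (1 / 2 : ℝ) * G x ^ (1 / 2 : ℝ) ∂μ ≤
      (∫⁻ x, F x ∂μ) ^ (1 / 2 : ℝ) * (∫⁻ x, G x ∂μ) ^ (1 / 2 : ℝ) := by
  have h := ENNReal.lintegral_mul_le_Lp_mul_Lq μ Real.HolderConjugate.two_two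
    (hF.pow_const (1 / 2 : ℝ)) (hG.pow_const (1 / 2 : ℝ))
  simp only [Pi.mul_apply, ← ENNReal.rpow_mul] at h
  norm_num at h ⊢
  exact h

lemma ENNReal.mul_eq_rpow_half_mul_rpow_half (k g : ℝ≥0∞) {w : ℝ≥0∞} (hw₀ : w ≠ 0) (hw : w ≠ ∞) :
    k * g = (k * w) ^ (1 / 2 : ℝ) * (k * (g ^ (2 : ℝ) / w)) ^ (1 / 2 : ℝ) := by
  have hsq : k * w * (k * (g ^ (2 : ℝ) / w)) = (k * g) ^ (2 : ℝ) := by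
    rw [ENNReal.rpow_two, ENNReal.rpow_two, div_eq_mul_inv]
    calc k * w * (k * (g ^ 2 * w⁻¹)) = k ^ 2 * g ^ 2 * (w * w⁻¹) := by ring
      _ = _ := by rw [ENNReal.mul_inv_cancel hw₀ hw, mul_one, mul_pow]
  rw [← ENNReal.mul_rpow_of_nonneg _ _ (by norm_num), hsq, ← ENNReal.rpow_mul]
  norm_num

lemma eLpNorm_two_eq (f : α → ℝ≥0∞) :
    eLpNorm f 2 μ = (∫⁻ x, f x ^ (2 : ℝ) ∂μ) ^ (1 / 2 : ℝ) := by
  simp [eLpNorm_eq_lintegral_rpow_enorm_toReal]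

variable [SFinite μ] [SFinite ν]

theorem lintegral_lintegral_mul_le_of_schur {k : α → β → ℝ≥0∞}
    (hk : Measurable (Function.uncurry k)) {u : α → ℝ≥0∞} {v : β → ℝ≥0∞} (hu : Measurable u)
    (hv : Measurable v) (hv₀ : ∀ᵐ y ∂ν, v y ≠ 0) (hv_top : ∀ᵐ y ∂ν, v y ≠ ∞) {A B : ℝ≥0∞}
    (hrow : ∀ᵐ x ∂μ, ∫⁻ y, k x y * v y ∂ν ≤ A * u x)
    (hcol : ∀ᵐ y ∂ν, ∫⁻ x, k x y * u x ∂μ ≤ B * v y)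
    {f : α → ℝ≥0∞} {g : β → ℝ≥0∞} (hf : AEMeasurable f μ) (hg : Measurable g) :
    ∫⁻ x, ∫⁻ y, f x * k x y * g y ∂ν ∂μ ≤
      (A * B) ^ (1 / 2 : ℝ) * eLpNorm f 2 μ * eLpNorm g 2 ν := by
  -- Cauchy–Schwarz in `y` against the weight `v`, then in `x`.
  set G : α → ℝ≥0∞ := fun x ↦ ∫⁻ y, k x y * (g y ^ (2 : ℝ) / v y) ∂ν
  have hkG : Measurable (Function.uncurry fun x y ↦ k x y * (g y ^ (2 : ℝ) / v y)) :=
    hk.mul (((hg.pow_const _).div hv).comp measurable_snd)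
  have inner : ∀ᵐ x ∂μ, ∫⁻ y, f x * k x y * g y ∂ν ≤
      (f x ^ (2 : ℝ)) ^ (1 / 2 : ℝ) * (A * u x * G x) ^ (1 / 2 : ℝ) := by
    filter_upwards [hrow] with x hx
    have hkx : Measurable (k x) := hk.of_uncurry_left
    calc ∫⁻ y, f x * k x y * g y ∂ν
        = f x * ∫⁻ y, (k x y * v y) ^ (1 / 2 : ℝ) *
            (k x y * (g y ^ (2 : ℝ) / v y)) ^ (1 / 2 : ℝ) ∂ν := by
          rw [← lintegral_const_mul _ (by fun_prop)]
          refine lintegral_congr_ae ?_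
          filter_upwards [hv₀, hv_top] with y hy₀ hy_top
          rw [mul_assoc, ENNReal.mul_eq_rpow_half_mul_rpow_half (k x y) (g y) hy₀ hy_top]
      _ ≤ f x * ((∫⁻ y, k x y * v y ∂ν) ^ (1 / 2 : ℝ) * G x ^ (1 / 2 : ℝ)) := by
          gcongr
          exact lintegral_rpow_half_mul_rpow_half_le (hkx.mul hv).aemeasurable
            hkG.of_uncurry_left.aemeasurable
      _ ≤ f x * ((A * u x) ^ (1 / 2 : ℝ) * G x ^ (1 / 2 : ℝ)) := by gcongr
      _ = (f x ^ (2 : ℝ)) ^ (1 / 2 : ℝ) * (A * u x * G x) ^ (1 / 2 : ℝ) := by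
          rw [← ENNReal.rpow_mul, ENNReal.mul_rpow_of_nonneg (A * u x) (G x) (by norm_num)]
          norm_num
  have outer : ∫⁻ x, A * u x * G x ∂μ ≤ A * B * ∫⁻ y, g y ^ (2 : ℝ) ∂ν := by
    calc ∫⁻ x, A * u x * G x ∂μ
        = A * ∫⁻ y, g y ^ (2 : ℝ) / v y * ∫⁻ x, k x y * u x ∂μ ∂ν := by
          simp_rw [G, mul_assoc, ← lintegral_const_mul _ hkG.of_uncurry_left]
          rw [lintegral_const_mul _ (by fun_prop),
            lintegral_lintegral_swap (by fun_prop)]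
          congr 1
          refine lintegral_congr fun y ↦ ?_
          rw [← lintegral_const_mul _ (by fun_prop)]
          congr 1 with x
          ring
      _ ≤ A * ∫⁻ y, g y ^ (2 : ℝ) / v y * (B * v y) ∂ν :=
          mul_le_mul_right (lintegral_mono_ae (hcol.mono fun y hy ↦ by gcongr)) A
      _ = A * B * ∫⁻ y, g y ^ (2 : ℝ) ∂ν := by
          rw [mul_assoc A B, ← lintegral_const_mul B (by fun_prop)]
          congr 1
          refine lintegral_congr_ae ?_
          filter_upwards [hv₀, hv_top] with y hy₀ hy_top
          rw [div_eq_mul_inv, mul_left_comm, mul_assoc, ENNReal.inv_mul_cancel hy₀ hy_top,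
            mul_one]
  calc ∫⁻ x, ∫⁻ y, f x * k x y * g y ∂ν ∂μ
      ≤ ∫⁻ x, (f x ^ (2 : ℝ)) ^ (1 / 2 : ℝ) * (A * u x * G x) ^ (1 / 2 : ℝ) ∂μ :=
        lintegral_mono_ae inner
    _ ≤ (∫⁻ x, f x ^ (2 : ℝ) ∂μ) ^ (1 / 2 : ℝ) * (∫⁻ x, A * u x * G x ∂μ) ^ (1 / 2 : ℝ) :=
        lintegral_rpow_half_mul_rpow_half_le (hf.pow_const _)
          (by fun_prop : Measurable fun x ↦ A * u x * G x).aemeasurable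
    _ ≤ (∫⁻ x, f x ^ (2 : ℝ) ∂μ) ^ (1 / 2 : ℝ) *
          (A * B * ∫⁻ y, g y ^ (2 : ℝ) ∂ν) ^ (1 / 2 : ℝ) := by gcongr
    _ = (A * B) ^ (1 / 2 : ℝ) * eLpNorm f 2 μ * eLpNorm g 2 ν := by
        rw [eLpNorm_two_eq, eLpNorm_two_eq, ENNReal.mul_rpow_of_nonneg _ _ (by norm_num)]
        ring

end SchurTest

lemma ENNReal.rpow_neg_le_rpow_neg {x y : ℝ≥0∞} {p : ℝ} (hp : 0 ≤ p) (hxy : x ≤ y) :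
    y ^ (-p) ≤ x ^ (-p) := by
  rw [ENNReal.rpow_neg, ENNReal.rpow_neg]
  exact ENNReal.inv_le_inv.2 (rpow_le_rpow hxy hp)

lemma enorm_sub_rpow_mul_enorm_rpow_le_of_norm_eq_one {E : Type*} [NormedAddCommGroup E]
    {a b : ℝ} (ha : 0 ≤ a) (hb : 0 ≤ b) {x : E} (hx : ‖x‖ = 1) (y : E) :
    ‖x - y‖ₑ ^ (-b) * ‖y‖ₑ ^ (-a) ≤
      2 ^ a * (ball (0 : E) 2⁻¹).indicator (‖·‖ₑ ^ (-b)) (y - x) +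
      2 ^ b * (ball (0 : E) 2).indicator (‖·‖ₑ ^ (-a)) y +
      2 ^ b * (ball (0 : E) 2)ᶜ.indicator (‖·‖ₑ ^ (-(a + b))) y := by
  have two_inv_rpow_neg : ∀ p : ℝ, (2⁻¹ : ℝ≥0∞) ^ (-p) = 2 ^ p := fun p ↦ by
    rw [ENNReal.inv_rpow, ENNReal.rpow_neg, inv_inv]
  have enorm_ge {z : E} {t : ℝ} (h : t ≤ ‖z‖) : ENNReal.ofReal t ≤ ‖z‖ₑ :=
    ofReal_norm z ▸ ENNReal.ofReal_le_ofReal h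
  rw [enorm_sub_rev]
  by_cases hnear : ‖y - x‖ < 2⁻¹
  · have hy : 2⁻¹ ≤ ‖y‖ := by linarith [norm_sub_norm_le x y, norm_sub_rev x y]
    have hy' : ‖y‖ₑ ^ (-a) ≤ 2 ^ a := by
      simpa [two_inv_rpow_neg] using ENNReal.rpow_neg_le_rpow_neg ha (enorm_ge hy)
    rw [indicator_of_mem (by simpa using hnear), mul_comm (2 ^ a)]
    exact le_add_right (le_add_right (mul_le_mul_right hy' _))
  have hfar : ‖y - x‖ₑ ^ (-b) ≤ 2 ^ b := by
    simpa [two_inv_rpow_neg] using ENNReal.rpow_neg_le_rpow_neg hb (enorm_ge (not_lt.1 hnear))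
  by_cases hmid : ‖y‖ < 2
  · rw [indicator_of_mem (show y ∈ ball (0 : E) 2 by simpa using hmid)]
    exact le_add_right (le_add_left (mul_le_mul_left hfar _))
  · have hy : 2 ≤ ‖y‖ := not_lt.1 hmid
    have hxy : ‖y‖ / 2 ≤ ‖y - x‖ := by linarith [norm_sub_norm_le y x]
    have hy₀ : ‖y‖ₑ ≠ 0 := enorm_ne_zero.2 (norm_pos_iff.1 (by linarith))
    rw [indicator_of_mem (show y ∈ (ball (0 : E) 2)ᶜ by simpa using hy)]
    refine le_add_left ?_
    calc ‖y - x‖ₑ ^ (-b) * ‖y‖ₑ ^ (-a) ≤ (‖y‖ₑ * 2⁻¹) ^ (-b) * ‖y‖ₑ ^ (-a) := by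
          refine mul_le_mul_left (ENNReal.rpow_neg_le_rpow_neg hb ?_) _
          simpa [← ofReal_norm, div_eq_mul_inv, ENNReal.ofReal_mul] using enorm_ge hxy
      _ = 2 ^ b * ‖y‖ₑ ^ (-(a + b)) := by
          rw [ENNReal.mul_rpow_of_ne_top enorm_ne_top (by simp), two_inv_rpow_neg, neg_add,
            ENNReal.rpow_add _ _ hy₀ enorm_ne_top]
          ring

section RadialIntegrals

variable {E : Type*} [NormedAddCommGroup E] [NormedSpace ℝ E] [FiniteDimensional ℝ E]
  [MeasurableSpace E] [BorelSpace E] {μ : Measure E} [μ.IsAddHaarMeasure]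

lemma lintegral_eq_enorm_pow_mul_lintegral_comp_smul (f : E → ℝ≥0∞) {r : ℝ} (hr : r ≠ 0) :
    ∫⁻ y, f y ∂μ = ‖r‖ₑ ^ finrank ℝ E * ∫⁻ y, f (r • y) ∂μ := by
  have hmap := lintegral_map_equiv f (MeasurableEquiv.smul₀ r hr) (μ := μ)
  change ∫⁻ y, f y ∂μ.map (r • ·) = ∫⁻ y, f (r • y) ∂μ at hmap
  rw [← hmap, Measure.map_addHaar_smul μ hr, lintegral_smul_measure, smul_eq_mul, ← mul_assoc,
    Real.enorm_eq_ofReal_abs, ← ENNReal.ofReal_pow (abs_nonneg r),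
    ← ENNReal.ofReal_mul (by positivity), abs_inv, ← abs_pow, mul_inv_cancel₀ (by positivity),
    ENNReal.ofReal_one, one_mul]

lemma lintegral_enorm_smul_sub_rpow_mul_enorm_rpow (a b : ℝ) (x : E) {r : ℝ} (hr : r ≠ 0) :
    ∫⁻ y, ‖r • x - y‖ₑ ^ (-b) * ‖y‖ₑ ^ (-a) ∂μ =
      ‖r‖ₑ ^ (finrank ℝ E - a - b) * ∫⁻ y, ‖x - y‖ₑ ^ (-b) * ‖y‖ₑ ^ (-a) ∂μ := by
  have hr₀ : ‖r‖ₑ ≠ 0 := enorm_ne_zero.2 hr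
  rw [lintegral_eq_enorm_pow_mul_lintegral_comp_smul _ hr]
  simp_rw [← smul_sub, enorm_smul, ENNReal.mul_rpow_of_ne_top enorm_ne_top enorm_ne_top,
    mul_mul_mul_comm (‖r‖ₑ ^ (-b))]
  rw [lintegral_const_mul' _ _ (by finiteness), ← mul_assoc, ← ENNReal.rpow_natCast,
    ← ENNReal.rpow_add _ _ hr₀ enorm_ne_top, ← ENNReal.rpow_add _ _ hr₀ enorm_ne_top]
  ring_nf

variable [Nontrivial E]

lemma setLIntegral_enorm_rpow_neg_lt_top {s : Set E} {p : ℝ}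
    (h : IntegrableOn (fun y ↦ ‖y‖ ^ (-p)) s μ) : ∫⁻ y in s, ‖y‖ₑ ^ (-p) ∂μ < ∞ := by
  refine lt_of_eq_of_lt (lintegral_congr_ae ?_) h.2
  filter_upwards [ae_restrict_of_ae (compl_mem_ae_iff.2 (measure_singleton (μ := μ) 0))]
    with y (hy : y ≠ 0)
  rw [Real.enorm_of_nonneg (by positivity), ← ENNReal.ofReal_rpow_of_pos (norm_pos_iff.2 hy),
    ofReal_norm]

lemma setLIntegral_ball_enorm_rpow_neg_lt_top {p : ℝ} (hp : p < finrank ℝ E) (r : ℝ) :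
    ∫⁻ y in ball (0 : E) r, ‖y‖ₑ ^ (-p) ∂μ < ∞ :=
  setLIntegral_enorm_rpow_neg_lt_top <| integrableOn_ball_of_norm_le_rpow finrank_pos hp
    (C := 1) (.of_forall fun y ↦ by simp [abs_of_nonneg (Real.rpow_nonneg (norm_nonneg y) _)])
    (measurable_norm.pow_const _).aestronglyMeasurable

lemma setLIntegral_compl_ball_enorm_rpow_neg_lt_top {q : ℝ} (hq : finrank ℝ E < q) :
    ∫⁻ y in (ball (0 : E) 1)ᶜ, ‖y‖ₑ ^ (-q) ∂μ < ∞ := by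
  refine setLIntegral_enorm_rpow_neg_lt_top <|
    ((integrable_one_add_norm hq).const_mul (2 ^ q)).integrableOn.mono'
      (measurable_norm.pow_const _).aestronglyMeasurable ?_
  filter_upwards [ae_restrict_mem measurableSet_ball.compl] with y hy
  have hy₁ : 1 ≤ ‖y‖ := by simpa using hy
  have hq₀ : 0 ≤ q := by linarith [(Nat.cast_nonneg (finrank ℝ E) : (0 : ℝ) ≤ _)]
  rw [Real.norm_of_nonneg (by positivity)]
  calc ‖y‖ ^ (-q) ≤ ((1 + ‖y‖) / 2) ^ (-q) :=
        Real.rpow_le_rpow_of_nonpos (by positivity) (by linarith) (by linarith)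
    _ = 2 ^ q * (1 + ‖y‖) ^ (-q) := by
        rw [Real.div_rpow (by positivity) zero_le_two, Real.rpow_neg zero_le_two, div_inv_eq_mul,
          mul_comm]

lemma lintegral_enorm_sub_rpow_mul_enorm_rpow_le_of_norm_eq_one {a b : ℝ}
    (ha : a < finrank ℝ E) (hb : b < finrank ℝ E) (hab : finrank ℝ E < a + b) :
    ∃ C : ℝ≥0∞, C ≠ ∞ ∧ ∀ x : E, ‖x‖ = 1 → ∫⁻ y, ‖x - y‖ₑ ^ (-b) * ‖y‖ₑ ^ (-a) ∂μ ≤ C := by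
  have := setLIntegral_ball_enorm_rpow_neg_lt_top (μ := μ) hb 2⁻¹
  have := setLIntegral_ball_enorm_rpow_neg_lt_top (μ := μ) ha 2
  have := setLIntegral_compl_ball_enorm_rpow_neg_lt_top (μ := μ) hab
  refine ⟨2 ^ a * ∫⁻ y in ball (0 : E) 2⁻¹, ‖y‖ₑ ^ (-b) ∂μ +
    2 ^ b * ∫⁻ y in ball (0 : E) 2, ‖y‖ₑ ^ (-a) ∂μ +
    2 ^ b * ∫⁻ y in (ball (0 : E) 1)ᶜ, ‖y‖ₑ ^ (-(a + b)) ∂μ, by finiteness, fun x hx ↦ ?_⟩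
  refine (lintegral_mono (enorm_sub_rpow_mul_enorm_rpow_le_of_norm_eq_one
    (by linarith) (by linarith) hx)).trans ?_
  rw [lintegral_add_left (by fun_prop (disch := measurability)),
    lintegral_add_left (by fun_prop (disch := measurability)),
    lintegral_const_mul _ (by fun_prop (disch := measurability)),
    lintegral_const_mul _ (by fun_prop (disch := measurability)),
    lintegral_const_mul _ (by fun_prop (disch := measurability)),
    lintegral_sub_right_eq_self (fun z ↦ (ball (0 : E) 2⁻¹).indicator (‖·‖ₑ ^ (-b)) z) x,
    lintegral_indicator measurableSet_ball, lintegral_indicator measurableSet_ball,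
    lintegral_indicator measurableSet_ball.compl]
  exact add_le_add_right (mul_le_mul_right (lintegral_mono_set
    (compl_subset_compl.2 (ball_subset_ball one_le_two))) _) _

theorem lintegral_enorm_sub_rpow_mul_enorm_rpow_le {a b : ℝ} (ha : a < finrank ℝ E)
    (hb : b < finrank ℝ E) (hab : finrank ℝ E < a + b) :
    ∃ C : ℝ≥0∞, C ≠ ∞ ∧ ∀ x : E, x ≠ 0 →
      ∫⁻ y, ‖x - y‖ₑ ^ (-b) * ‖y‖ₑ ^ (-a) ∂μ ≤ C * ‖x‖ₑ ^ (finrank ℝ E - a - b) := by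
  obtain ⟨C, hC, hunit⟩ :=
    lintegral_enorm_sub_rpow_mul_enorm_rpow_le_of_norm_eq_one (μ := μ) ha hb hab
  refine ⟨C, hC, fun x hx ↦ ?_⟩
  have hx' : ‖x‖ ≠ 0 := norm_ne_zero_iff.2 hx
  calc ∫⁻ y, ‖x - y‖ₑ ^ (-b) * ‖y‖ₑ ^ (-a) ∂μ
      = ‖x‖ₑ ^ (finrank ℝ E - a - b) *
          ∫⁻ y, ‖‖x‖⁻¹ • x - y‖ₑ ^ (-b) * ‖y‖ₑ ^ (-a) ∂μ := by
        rw [← enorm_norm x, ← lintegral_enorm_smul_sub_rpow_mul_enorm_rpow a b _ hx',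
          smul_inv_smul₀ hx']
    _ ≤ ‖x‖ₑ ^ (finrank ℝ E - a - b) * C := by
        gcongr
        exact hunit _ (by rw [norm_smul, norm_inv, norm_norm, inv_mul_cancel₀ hx'])
    _ = C * ‖x‖ₑ ^ (finrank ℝ E - a - b) := mul_comm _ _

theorem lintegral_lintegral_mul_enorm_sub_rpow_mul_enorm_rpow_le {a : ℝ} (ha₀ : 0 < a)
    (ha : a < finrank ℝ E / 2) :
    ∃ C : ℝ≥0∞, C ≠ ∞ ∧ ∀ f g : E → ℝ≥0∞, AEMeasurable f μ → Measurable g →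
      ∫⁻ x, ∫⁻ y, f x * (‖x - y‖ₑ ^ (-(finrank ℝ E - a)) * ‖y‖ₑ ^ (-a)) * g y ∂μ ∂μ ≤
        C * eLpNorm f 2 μ * eLpNorm g 2 μ := by
  set n : ℝ := (finrank ℝ E : ℝ)
  obtain ⟨A, hA, hrow⟩ := lintegral_enorm_sub_rpow_mul_enorm_rpow_le (μ := μ)
    (a := a + n / 2) (b := n - a) (by linarith) (by linarith) (by linarith)
  obtain ⟨B, hB, hcol⟩ := lintegral_enorm_sub_rpow_mul_enorm_rpow_le (μ := μ)
    (a := n / 2) (b := n - a) (by linarith) (by linarith) (by linarith)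
  have hne : ∀ᵐ y ∂μ, y ≠ 0 := compl_mem_ae_iff.2 (measure_singleton 0)
  refine ⟨(A * B) ^ (1 / 2 : ℝ), by finiteness, fun f g hf hg ↦ ?_⟩
  refine lintegral_lintegral_mul_le_of_schur (u := (‖·‖ₑ ^ (-(n / 2))))
    (v := (‖·‖ₑ ^ (-(n / 2)))) (by fun_prop) (by fun_prop) (by fun_prop) ?_ ?_ ?_ ?_ hf hg
  · exact .of_forall fun y ↦ by simpa using fun _ ↦ by positivity
  · filter_upwards [hne] with y hy
    simp [hy]
  · filter_upwards [hne] with x hx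
    calc ∫⁻ y, ‖x - y‖ₑ ^ (-(n - a)) * ‖y‖ₑ ^ (-a) * ‖y‖ₑ ^ (-(n / 2)) ∂μ
        = ∫⁻ y, ‖x - y‖ₑ ^ (-(n - a)) * ‖y‖ₑ ^ (-(a + n / 2)) ∂μ := by
          refine lintegral_congr_ae ?_
          filter_upwards [hne] with y hy
          rw [mul_assoc, ← ENNReal.rpow_add _ _ (enorm_ne_zero.2 hy) enorm_ne_top, neg_add]
      _ ≤ A * ‖x‖ₑ ^ (n - (a + n / 2) - (n - a)) := hrow x hx
      _ = A * ‖x‖ₑ ^ (-(n / 2)) := by ring_nf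
  · filter_upwards [hne] with y hy
    have hy₀ : ‖y‖ₑ ≠ 0 := enorm_ne_zero.2 hy
    calc ∫⁻ x, ‖x - y‖ₑ ^ (-(n - a)) * ‖y‖ₑ ^ (-a) * ‖x‖ₑ ^ (-(n / 2)) ∂μ
        = ‖y‖ₑ ^ (-a) * ∫⁻ x, ‖y - x‖ₑ ^ (-(n - a)) * ‖x‖ₑ ^ (-(n / 2)) ∂μ := by
          rw [← lintegral_const_mul' _ _ (by finiteness)]
          congr 1 with x
          rw [enorm_sub_rev]
          ring
      _ ≤ ‖y‖ₑ ^ (-a) * (B * ‖y‖ₑ ^ (n - n / 2 - (n - a))) := by gcongr; exact hcol y hy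
      _ = B * ‖y‖ₑ ^ (-(n / 2)) := by
          rw [mul_left_comm, ← ENNReal.rpow_add _ _ hy₀ enorm_ne_top]
          ring_nf

end RadialIntegrals

lemma enorm_mul_sub_le_of_lipschitzWith {E : Type*} [NormedAddCommGroup E] {K : E × E → ℂ}
    {c : ℝ} {m : ℕ} (hK : ∀ x y, x ≠ y → ‖K (x, y)‖ ≤ c / ‖x - y‖ ^ (m + 1)) {g : E → ℝ}
    {L : NNReal} (hg : LipschitzWith L g) (x y : E) :
    ‖K (x, y) * ((g y - g x : ℝ) : ℂ)‖ₑ ≤ ENNReal.ofReal (|c| * L) * ‖x - y‖ₑ ^ (-(m : ℝ)) := by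
  rcases eq_or_ne x y with rfl | hxy
  · simp
  have hd : 0 < ‖x - y‖ := norm_pos_iff.2 (sub_ne_zero.2 hxy)
  have hgxy : |g y - g x| ≤ L * ‖x - y‖ := by
    simpa [Real.dist_eq, dist_eq_norm, abs_sub_comm] using hg.dist_le_mul x y
  rw [← ofReal_norm, ← ofReal_norm, ENNReal.ofReal_rpow_of_pos hd,
    ← ENNReal.ofReal_mul (by positivity)]
  refine ENNReal.ofReal_le_ofReal ?_
  calc ‖K (x, y) * ((g y - g x : ℝ) : ℂ)‖ ≤ c / ‖x - y‖ ^ (m + 1) * (L * ‖x - y‖) := by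
        rw [norm_mul, Complex.norm_real, Real.norm_eq_abs]
        exact mul_le_mul (hK x y hxy) hgxy (abs_nonneg _) ((norm_nonneg _).trans (hK x y hxy))
    _ = c * (L * ‖x - y‖ ^ (-(m : ℝ))) := by
        rw [Real.rpow_neg hd.le, Real.rpow_natCast]
        field_simp
        ring
    _ ≤ |c| * L * ‖x - y‖ ^ (-(m : ℝ)) := by
        rw [mul_assoc]
        exact mul_le_mul_of_nonneg_right (le_abs_self c) (by positivity)

lemma norm_integral_integral_le_toReal {α β F : Type*} [MeasurableSpace α] [MeasurableSpace β]
    [NormedAddCommGroup F] [NormedSpace ℝ F] {μ : Measure α} {ν : Measure β} {f : α → β → F}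
    {B : ℝ≥0∞} (hB : B ≠ ∞) (h : ∫⁻ x, ∫⁻ y, ‖f x y‖ₑ ∂ν ∂μ ≤ B) :
    ‖∫ x, ∫ y, f x y ∂ν ∂μ‖ ≤ B.toReal := by
  rw [← toReal_enorm]
  refine ENNReal.toReal_mono hB ((enorm_integral_le_lintegral_enorm _).trans ?_)
  exact (lintegral_mono fun x ↦ enorm_integral_le_lintegral_enorm _).trans h

lemma enorm_commutator_integrand_le {E : Type*} [NormedAddCommGroup E] {K : E × E → ℂ} {c : ℝ}
    (hK : ∀ x y, x ≠ y → ‖K (x, y)‖ ≤ c / ‖x - y‖ ^ 3) {g : E → ℝ} {L : NNReal}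
    (hg : LipschitzWith L g) (u v : ℂ) (x y : E) :
    ‖(starRingEnd ℂ) u * K (x, y) * ((g y - g x : ℝ) : ℂ) * ((1 / ‖y‖ : ℝ) : ℂ) * v‖ₑ ≤
      ENNReal.ofReal (|c| * L) * (‖u‖ₑ * (‖x - y‖ₑ ^ (-2 : ℝ) * ‖y‖ₑ ^ (-1 : ℝ)) * ‖v‖ₑ) := by
  have hy : ‖((1 / ‖y‖ : ℝ) : ℂ)‖ₑ ≤ ‖y‖ₑ ^ (-1 : ℝ) := by
    rw [ENNReal.rpow_neg_one]
    rcases eq_or_ne y 0 with rfl | hy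
    · simp
    rw [← ofReal_norm, Complex.norm_real, one_div, norm_inv, norm_norm,
      ENNReal.ofReal_inv_of_pos (norm_pos_iff.2 hy), ofReal_norm]
  have hKg : ‖K (x, y) * ((g y - g x : ℝ) : ℂ)‖ₑ ≤
      ENNReal.ofReal (|c| * L) * ‖x - y‖ₑ ^ (-2 : ℝ) :=
    mod_cast enorm_mul_sub_le_of_lipschitzWith (m := 2) hK hg x y
  rw [show (starRingEnd ℂ) u * K (x, y) * ((g y - g x : ℝ) : ℂ) * ((1 / ‖y‖ : ℝ) : ℂ) * v =
      (starRingEnd ℂ) u * (K (x, y) * ((g y - g x : ℝ) : ℂ)) * ((1 / ‖y‖ : ℝ) : ℂ) * v by ring,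
    enorm_mul, enorm_mul, enorm_mul, RCLike.enorm_conj]
  calc ‖u‖ₑ * ‖K (x, y) * ((g y - g x : ℝ) : ℂ)‖ₑ * ‖((1 / ‖y‖ : ℝ) : ℂ)‖ₑ * ‖v‖ₑ
      ≤ ‖u‖ₑ * (ENNReal.ofReal (|c| * L) * ‖x - y‖ₑ ^ (-2 : ℝ)) * ‖y‖ₑ ^ (-1 : ℝ) * ‖v‖ₑ := by
        gcongr
    _ = _ := by ring

/-- Let `K : ℝ³ × ℝ³ → ℂ` be measurable with `|K(x,y)| ≤ c₀/|x-y|³` for `x ≠ y`, let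
`g₀ : ℝ³ → ℝ` be Lipschitz with constant `c₁`, let `R > 1` and set `g(x) := g₀(x/R)`.
Then there is a constant `c`, depending only on `c₀` and `c₁` (not on `R`), such that for
all `ψ ∈ L²(ℝ³)` and all `φ ∈ C_c^∞(ℝ³)`:
`|∫∫ conj(ψ(x)) K(x,y) (g(y) - g(x)) (1/|y|) φ(y) dy dx| ≤ (c/R) ‖ψ‖₂ ‖φ‖₂`. -/
theorem commutator_coulomb_form_bound_scaled (c₀ : ℝ) (c₁ : NNReal) :
    ∃ c : ℝ, ∀ (K : EuclideanSpace ℝ (Fin 3) × EuclideanSpace ℝ (Fin 3) → ℂ)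
      (g₀ : EuclideanSpace ℝ (Fin 3) → ℝ) (R : ℝ),
      Measurable K →
      (∀ x y : EuclideanSpace ℝ (Fin 3), x ≠ y → ‖K (x, y)‖ ≤ c₀ / ‖x - y‖ ^ 3) →
      LipschitzWith c₁ g₀ →
      1 < R →
      ∀ ψ φ : EuclideanSpace ℝ (Fin 3) → ℂ,
        MemLp ψ 2 volume → ContDiff ℝ (⊤ : ℕ∞) φ → HasCompactSupport φ →
        ‖∫ x, ∫ y, (starRingEnd ℂ) (ψ x) * K (x, y) *
            ((g₀ (R⁻¹ • y) - g₀ (R⁻¹ • x) : ℝ) : ℂ) *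
            ((1 / ‖y‖ : ℝ) : ℂ) * φ y‖ ≤
          c / R * (eLpNorm ψ 2 volume).toReal * (eLpNorm φ 2 volume).toReal := by
  obtain ⟨C, hC, hL2⟩ := lintegral_lintegral_mul_enorm_sub_rpow_mul_enorm_rpow_le
    (μ := (volume : Measure (EuclideanSpace ℝ (Fin 3)))) (a := 1) one_pos (by norm_num)
  rw [finrank_euclideanSpace_fin, show -((3 : ℕ) - 1 : ℝ) = -2 by norm_num] at hL2
  refine ⟨|c₀| * c₁ * C.toReal, fun K g₀ R _ hK hg hR ψ φ hψ hφ hφc ↦ ?_⟩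
  have hψ₂ := hψ.eLpNorm_lt_top
  have hφ₂ :=
    (hφ.continuous.memLp_of_hasCompactSupport (μ := volume) (p := 2) hφc).eLpNorm_lt_top
  have hR₀ : 0 < R := one_pos.trans hR
  have hgR : LipschitzWith (c₁ * ‖R⁻¹‖₊) fun y ↦ g₀ (R⁻¹ • y) :=
    hg.comp (lipschitzWith_smul R⁻¹)
  refine (norm_integral_integral_le_toReal (B := ENNReal.ofReal (|c₀| * (c₁ * ‖R⁻¹‖₊)) *
    (C * eLpNorm ψ 2 volume * eLpNorm φ 2 volume)) (by finiteness) ?_).trans_eq ?_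
  · calc _ ≤ ∫⁻ x, ∫⁻ y, ENNReal.ofReal (|c₀| * (c₁ * ‖R⁻¹‖₊)) *
            (‖ψ x‖ₑ * (‖x - y‖ₑ ^ (-2 : ℝ) * ‖y‖ₑ ^ (-1 : ℝ)) * ‖φ y‖ₑ) :=
          lintegral_mono fun x ↦ lintegral_mono fun y ↦
            enorm_commutator_integrand_le hK hgR (ψ x) (φ y) x y
      _ ≤ _ := by
          simp_rw [lintegral_const_mul' _ _ ENNReal.ofReal_ne_top]
          gcongr
          exact hL2 _ _ hψ.1.enorm hφ.continuous.measurable.enorm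
  · rw [ENNReal.toReal_mul, ENNReal.toReal_ofReal (by positivity), ENNReal.toReal_mul,
      ENNReal.toReal_mul, coe_nnnorm, norm_inv, Real.norm_of_nonneg hR₀.le]
    ring
end

section
/- Let m > 0, k, l ∈ {1,2,3}, λ ∈ (0,1), let ω : ℝ³ → ℝ³ be measurable, let ψ ∈ L²(ℝ³) and let φ ∈ C_c^∞(ℝ³). Then | ∫_{ℝ³} ∫_{ℝ³} conj(ψ(x)) · (e^{−m|z|}/|z|⁴) · z_k z_l · e^{i ω(x)·z} · (∂_l φ)(x + λz) dz dx | ≤ (4π/m) · ‖ψ‖₂ · ‖∂_l φ‖₂. (Here 4π/m = ∫_{ℝ³} e^{−m|z|}/|z|² dz.) -/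
/-!
Bounding `|z_k z_l| ≤ |z|²` and dropping the unimodular phase, the integrand is dominated by
`w(z) |ψ(x)| |∂_l φ(x + λz)|` with `w(z) = e^{-m|z|}/|z|²`. By Tonelli, integrate in `x` first:
for fixed `z`, Cauchy–Schwarz and translation invariance of the `L²` norm bound the inner
integral by `‖ψ‖₂ ‖∂_l φ‖₂`, which leaves `∫ w = 4π/m`, computed in polar coordinates.
-/

open Real MeasureTheory
open scoped ENNReal

lemma lintegral_enorm_mul_enorm_le_eLpNorm_two_mul_eLpNorm_two {α E F : Type*}
    [MeasurableSpace α] {μ : Measure α} [NormedAddCommGroup E] [NormedAddCommGroup F]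
    {f : α → E} {g : α → F}
    (hf : AEStronglyMeasurable f μ) (hg : AEStronglyMeasurable g μ) :
    ∫⁻ x, ‖f x‖ₑ * ‖g x‖ₑ ∂μ ≤ eLpNorm f 2 μ * eLpNorm g 2 μ := by
  have h := ENNReal.lintegral_mul_le_Lp_mul_Lq μ .two_two hf.enorm hg.enorm
  simp only [eLpNorm_eq_lintegral_rpow_enorm_toReal two_ne_zero ENNReal.ofNat_ne_top]
  simpa using h

section

variable {E F G : Type*} [NormedAddCommGroup E] [MeasurableSpace E] [BorelSpace E]
  [SecondCountableTopology E] {μ : Measure E} [μ.IsAddRightInvariant] [SFinite μ]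
  [NormedAddCommGroup F] [NormedAddCommGroup G]

lemma lintegral_lintegral_weight_mul_translate_le {w : E → ℝ≥0∞} (hw : AEMeasurable w μ)
    {τ : E → E} (hτ : Measurable τ) {ψ : E → F} {g : E → G}
    (hψ : AEStronglyMeasurable ψ μ) (hg : StronglyMeasurable g) :
    ∫⁻ x, ∫⁻ z, w z * (‖ψ x‖ₑ * ‖g (x + τ z)‖ₑ) ∂μ ∂μ ≤
      (∫⁻ z, w z ∂μ) * (eLpNorm ψ 2 μ * eLpNorm g 2 μ) := by
  have hmeas : AEMeasurable (Function.uncurry fun x z => w z * (‖ψ x‖ₑ * ‖g (x + τ z)‖ₑ))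
      (μ.prod μ) :=
    hw.comp_snd.mul (hψ.comp_fst.enorm.mul (hg.comp_measurable
      (measurable_fst.add (hτ.comp measurable_snd))).aestronglyMeasurable.enorm)
  rw [lintegral_lintegral_swap hmeas, ← lintegral_mul_const'' _ hw]
  refine lintegral_mono fun z => ?_
  have hgz : AEStronglyMeasurable (fun x => g (x + τ z)) μ :=
    (hg.comp_measurable (measurable_add_const (τ z))).aestronglyMeasurable
  rw [lintegral_const_mul'' (f := fun x => ‖ψ x‖ₑ * ‖g (x + τ z)‖ₑ) _ (hψ.enorm.mul hgz.enorm),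
    ← eLpNorm_comp_measurePreserving hg.aestronglyMeasurable (measurePreserving_add_right μ (τ z))]
  exact mul_le_mul_right (lintegral_enorm_mul_enorm_le_eLpNorm_two_mul_eLpNorm_two hψ hgz) _

lemma norm_integral_integral_le_of_norm_le_weight {H : Type*} [NormedAddCommGroup H]
    [NormedSpace ℝ H] {w : E → ℝ} (hw : Integrable w μ) (hw0 : ∀ z, 0 ≤ w z)
    {τ : E → E} (hτ : Measurable τ) {ψ : E → F} {g : E → G} (hψ : MemLp ψ 2 μ)
    (hg : MemLp g 2 μ) (hgm : StronglyMeasurable g) {K : E → E → H}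
    (hK : ∀ x z, ‖K x z‖ ≤ w z * (‖ψ x‖ * ‖g (x + τ z)‖)) :
    ‖∫ x, ∫ z, K x z ∂μ ∂μ‖ ≤
      (∫ z, w z ∂μ) * (eLpNorm ψ 2 μ).toReal * (eLpNorm g 2 μ).toReal := by
  have hbound : ‖∫ x, ∫ z, K x z ∂μ ∂μ‖ₑ ≤
      ENNReal.ofReal (∫ z, w z ∂μ) * (eLpNorm ψ 2 μ * eLpNorm g 2 μ) := calc
    ‖∫ x, ∫ z, K x z ∂μ ∂μ‖ₑ ≤ ∫⁻ x, ∫⁻ z, ‖K x z‖ₑ ∂μ ∂μ :=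
      (enorm_integral_le_lintegral_enorm _).trans
        (lintegral_mono fun x => enorm_integral_le_lintegral_enorm _)
    _ ≤ ∫⁻ x, ∫⁻ z, ENNReal.ofReal (w z) * (‖ψ x‖ₑ * ‖g (x + τ z)‖ₑ) ∂μ ∂μ := by
      refine lintegral_mono fun x => lintegral_mono fun z => ?_
      rw [← ofReal_norm, ← ofReal_norm, ← ofReal_norm, ← ENNReal.ofReal_mul (norm_nonneg _),
        ← ENNReal.ofReal_mul (hw0 z)]
      exact ENNReal.ofReal_le_ofReal (hK x z)
    _ ≤ (∫⁻ z, ENNReal.ofReal (w z) ∂μ) * (eLpNorm ψ 2 μ * eLpNorm g 2 μ) :=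
      lintegral_lintegral_weight_mul_translate_le hw.1.aemeasurable.ennreal_ofReal hτ hψ.1 hgm
    _ = ENNReal.ofReal (∫ z, w z ∂μ) * (eLpNorm ψ 2 μ * eLpNorm g 2 μ) := by
      rw [ofReal_integral_eq_lintegral_ofReal hw (.of_forall hw0)]
  have hfin : ENNReal.ofReal (∫ z, w z ∂μ) * (eLpNorm ψ 2 μ * eLpNorm g 2 μ) ≠ ∞ :=
    ENNReal.mul_ne_top ENNReal.ofReal_ne_top (ENNReal.mul_ne_top hψ.2.ne hg.2.ne)
  have hbound_real := ENNReal.toReal_mono hfin hbound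
  rwa [toReal_enorm, ENNReal.toReal_mul, ENNReal.toReal_mul,
    ENNReal.toReal_ofReal (integral_nonneg hw0), ← mul_assoc] at hbound_real

end

lemma abs_div_norm_pow_four_mul_apply_mul_apply_le {ι : Type*} [Fintype ι] {c : ℝ}
    (hc : 0 ≤ c) (z : EuclideanSpace ℝ ι) (k l : ι) :
    |c / ‖z‖ ^ 4 * z k * z l| ≤ c / ‖z‖ ^ 2 := by
  have hcoord (i : ι) : |z i| ≤ ‖z‖ := PiLp.norm_apply_le z i
  calc |c / ‖z‖ ^ 4 * z k * z l| = c / ‖z‖ ^ 4 * (|z k| * |z l|) := by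
        rw [abs_mul, abs_mul, abs_of_nonneg (by positivity), mul_assoc]
    _ ≤ c / ‖z‖ ^ 4 * (‖z‖ * ‖z‖) := by gcongr <;> exact hcoord _
    _ = c / ‖z‖ ^ 2 := by
        rcases eq_or_ne ‖z‖ 0 with hz | hz
        · simp [hz]
        · field_simp

lemma integrable_exp_neg_mul_norm_div_sq {m : ℝ} (hm : 0 < m) :
    Integrable fun z : EuclideanSpace ℝ (Fin 3) => exp (-m * ‖z‖) / ‖z‖ ^ 2 := by
  rw [integrable_fun_norm_addHaar volume (f := fun y => exp (-m * y) / y ^ 2),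
    finrank_euclideanSpace_fin]
  refine (exp_neg_integrableOn_Ioi 0 hm).congr_fun (fun y (hy : 0 < y) => ?_) measurableSet_Ioi
  simp only [smul_eq_mul, neg_mul]
  field_simp

lemma integral_exp_neg_mul_norm_div_sq {m : ℝ} (hm : 0 < m) :
    ∫ z : EuclideanSpace ℝ (Fin 3), exp (-m * ‖z‖) / ‖z‖ ^ 2 = 4 * π / m := by
  rw [integral_fun_norm_addHaar volume (fun y => exp (-m * y) / y ^ 2),
    finrank_euclideanSpace_fin, Measure.real, EuclideanSpace.volume_ball_fin_three]
  have h : ∫ y in Set.Ioi (0 : ℝ), y ^ (3 - 1) • (exp (-m * y) / y ^ 2) =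
      ∫ y in Set.Ioi (0 : ℝ), exp (-m * y) := by
    refine setIntegral_congr_fun measurableSet_Ioi fun y (hy : 0 < y) => ?_
    simp only [smul_eq_mul]
    field_simp
  rw [h, integral_exp_mul_Ioi (neg_lt_zero.mpr hm)]
  simp only [ENNReal.ofReal_one, one_pow, one_mul, mul_zero, exp_zero, nsmul_eq_mul, smul_eq_mul,
    ENNReal.toReal_ofReal (by positivity : 0 ≤ π * 4 / 3)]
  field_simp
  ring

theorem taylor_remainder_form_bound_general (m : ℝ) (hm : 0 < m) (k l : Fin 3) (lam : ℝ)
    (ω : EuclideanSpace ℝ (Fin 3) → EuclideanSpace ℝ (Fin 3))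
    (ψ φ : EuclideanSpace ℝ (Fin 3) → ℂ) (hψ : MemLp ψ 2 volume)
    (hφ : ContDiff ℝ (⊤ : ℕ∞) φ) (hφc : HasCompactSupport φ) :
    ‖∫ x : EuclideanSpace ℝ (Fin 3), ∫ z : EuclideanSpace ℝ (Fin 3),
        (starRingEnd ℂ) (ψ x) *
          ((Real.exp (-m * ‖z‖) / ‖z‖ ^ 4 * z k * z l : ℝ) : ℂ) *
          Complex.exp (Complex.I * ((inner ℝ (ω x) z : ℝ) : ℂ)) *
          fderiv ℝ φ (x + lam • z) (EuclideanSpace.single l 1)‖ ≤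
      4 * π / m * (eLpNorm ψ 2 volume).toReal *
        (eLpNorm (fun x => fderiv ℝ φ x (EuclideanSpace.single l 1)) 2 volume).toReal := by
  set g := fun x => fderiv ℝ φ x (EuclideanSpace.single l 1)
  have hg : Continuous g := (hφ.continuous_fderiv (by simp)).clm_apply continuous_const
  have hgL2 : MemLp g 2 volume :=
    hg.memLp_of_hasCompactSupport <| (hφc.fderiv ℝ).comp_left
      (g := fun L : EuclideanSpace ℝ (Fin 3) →L[ℝ] ℂ => L (EuclideanSpace.single l 1)) rfl
  rw [← integral_exp_neg_mul_norm_div_sq hm]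
  refine norm_integral_integral_le_of_norm_le_weight (integrable_exp_neg_mul_norm_div_sq hm)
    (fun z => by positivity) (measurable_const_smul lam) hψ hgL2 hg.stronglyMeasurable
    fun x z => ?_
  have hphase : ‖Complex.exp (Complex.I * ((inner ℝ (ω x) z : ℝ) : ℂ))‖ = 1 := by
    rw [Complex.norm_exp]; simp
  rw [norm_mul, norm_mul, norm_mul, hphase, mul_one, Complex.norm_conj, Complex.norm_real,
    Real.norm_eq_abs]
  have hkernel := abs_div_norm_pow_four_mul_apply_mul_apply_le (exp_pos (-m * ‖z‖)).le z k l
  calc _ ≤ ‖ψ x‖ * (exp (-m * ‖z‖) / ‖z‖ ^ 2) * ‖g (x + lam • z)‖ := by gcongr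
    _ = _ := by ring

/-- Let `m > 0`, `k, l ∈ {1,2,3}`, `λ ∈ (0,1)`, let `ω : ℝ³ → ℝ³` be measurable, let
`ψ ∈ L²(ℝ³)` and `φ ∈ C_c^∞(ℝ³)`. Then
`|∫∫ conj(ψ(x)) (e^{-m|z|}/|z|⁴) z_k z_l e^{i ω(x)·z} (∂_l φ)(x + λz) dz dx|
  ≤ (4π/m) ‖ψ‖₂ ‖∂_l φ‖₂`. -/
theorem taylor_remainder_form_bound (m : ℝ) (hm : 0 < m) (k l : Fin 3) (lam : ℝ)
    (hlam : lam ∈ Set.Ioo (0 : ℝ) 1)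
    (ω : EuclideanSpace ℝ (Fin 3) → EuclideanSpace ℝ (Fin 3)) (hω : Measurable ω)
    (ψ φ : EuclideanSpace ℝ (Fin 3) → ℂ) (hψ : MemLp ψ 2 volume)
    (hφ : ContDiff ℝ (⊤ : ℕ∞) φ) (hφc : HasCompactSupport φ) :
    ‖∫ x : EuclideanSpace ℝ (Fin 3), ∫ z : EuclideanSpace ℝ (Fin 3),
        (starRingEnd ℂ) (ψ x) *
          ((Real.exp (-m * ‖z‖) / ‖z‖ ^ 4 * z k * z l : ℝ) : ℂ) *
          Complex.exp (Complex.I * ((inner ℝ (ω x) z : ℝ) : ℂ)) *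
          fderiv ℝ φ (x + lam • z) (EuclideanSpace.single l 1)‖ ≤
      4 * π / m * (eLpNorm ψ 2 volume).toReal *
        (eLpNorm (fun x => fderiv ℝ φ x (EuclideanSpace.single l 1)) 2 volume).toReal :=
  taylor_remainder_form_bound_general m hm k l lam ω ψ φ hψ hφ hφc
end
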